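/- arXiv:1904.05151 — 12 statements merged into one kernel-verified Lean document; each statement's English description precedes it below -/
import Mathlib

section
/- Let F : ℝ₊^D → ℝ₊^D be continuous, order preserving, and positively homogeneous of degree 1. Then the limit lim_{k→∞} (max_{d∈D} (F^k(e))_d)^{1/k} exists and is equal to inf { λ > 0 : there exists X ∈ int ℝ₊^D with F(X) ≤ λ X }. -/
/-!
If `F X ≤ λ X` with `X > 0`, then `e ≤ c X` for some `c > 0`, so monotonicity and homogeneity give
`F^k e ≤ c λ^k X`: the growth rate of `F^k e` is at most `λ`.

Conversely, suppose `F^m e < λ^m e` coordinatewise. The perturbations `G_ε X = F X + ε X` are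
again order preserving and homogeneous, have strictly positive orbits for `ε > 0`, and by
continuity still satisfy `G_ε^m e ≤ λ^m e` for small `ε`. Then `X = min_{j<m} λ^{-j} G_ε^j e` is
strictly positive and `F X ≤ G_ε X ≤ λ X`, because `G_ε` maps each term of the minimum to `λ`
times the next one, and the last one to at most `λ e`. Hence the infimum is a lower bound for
every `(max_d (F^k e)_d)^{1/k}`.
-/

open Filter Topology Set

structure IsOrderPreservingHomogeneous {D : Type*} (F : (D → ℝ) → (D → ℝ)) : Prop where
  mapsTo : MapsTo F (Ici 0) (Ici 0)
  monotoneOn : MonotoneOn F (Ici 0)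
  map_smul : ∀ c : ℝ, 0 < c → ∀ X, 0 ≤ X → F (c • X) = c • F X

namespace IsOrderPreservingHomogeneous

variable {D : Type*} {F : (D → ℝ) → (D → ℝ)}

theorem iterate_nonneg (hF : IsOrderPreservingHomogeneous F) {X : D → ℝ} (hX : 0 ≤ X) (n : ℕ) :
    0 ≤ F^[n] X :=
  hF.mapsTo.iterate n hX

theorem monotoneOn_iterate (hF : IsOrderPreservingHomogeneous F) :
    ∀ n, MonotoneOn F^[n] (Ici 0)
  | 0 => monotoneOn_id
  | n + 1 => (monotoneOn_iterate hF n).comp hF.monotoneOn hF.mapsTo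

theorem iterate_smul (hF : IsOrderPreservingHomogeneous F) {c : ℝ} (hc : 0 < c) {X : D → ℝ}
    (hX : 0 ≤ X) : ∀ n, F^[n] (c • X) = c • F^[n] X
  | 0 => rfl
  | n + 1 => by
    rw [Function.iterate_succ_apply', Function.iterate_succ_apply', iterate_smul hF hc hX n,
      hF.map_smul c hc _ (hF.iterate_nonneg hX n)]

theorem iterate_le_pow_smul (hF : IsOrderPreservingHomogeneous F) {lam : ℝ} (hlam : 0 < lam)
    {X : D → ℝ} (hX : 0 ≤ X) (h : F X ≤ lam • X) : ∀ n, F^[n] X ≤ lam ^ n • X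
  | 0 => by simp
  | n + 1 => by
    have hpow : 0 < lam ^ n := pow_pos hlam n
    calc F^[n + 1] X = F (F^[n] X) := Function.iterate_succ_apply' F n X
      _ ≤ F (lam ^ n • X) := hF.monotoneOn (hF.iterate_nonneg hX n)
          (smul_nonneg hpow.le hX) (iterate_le_pow_smul hF hlam hX h n)
      _ = lam ^ n • F X := hF.map_smul _ hpow X hX
      _ ≤ lam ^ n • lam • X := smul_le_smul_of_nonneg_left h hpow.le
      _ = lam ^ (n + 1) • X := by rw [smul_smul, pow_succ]

theorem iterate_le_smul_of_le_smul (hF : IsOrderPreservingHomogeneous F) {lam c : ℝ}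
    (hlam : 0 < lam) (hc : 0 < c) {X Y : D → ℝ} (hY : 0 ≤ Y) (hYX : Y ≤ c • X)
    (h : F X ≤ lam • X) (n : ℕ) : F^[n] Y ≤ (c * lam ^ n) • X := by
  have hX : 0 ≤ X := fun d => (mul_nonneg_iff_of_pos_left hc).1 (hY.trans hYX d)
  calc F^[n] Y ≤ F^[n] (c • X) := hF.monotoneOn_iterate n hY (smul_nonneg hc.le hX) hYX
    _ = c • F^[n] X := hF.iterate_smul hc hX n
    _ ≤ c • lam ^ n • X := smul_le_smul_of_nonneg_left (hF.iterate_le_pow_smul hlam hX h n) hc.le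
    _ = (c * lam ^ n) • X := smul_smul _ _ _

theorem exists_iterate_le_mul_pow [Finite D] (hF : IsOrderPreservingHomogeneous F) {lam : ℝ}
    (hlam : 0 < lam) {X Y : D → ℝ} (hX : ∀ d, 0 < X d) (hY : 0 ≤ Y) (h : F X ≤ lam • X) :
    ∃ C > 0, ∀ n d, F^[n] Y d ≤ C * lam ^ n := by
  obtain ⟨c, hc⟩ := Finite.exists_le fun d => Y d / X d
  obtain ⟨M, hM⟩ := Finite.exists_le X
  have hYX : Y ≤ max c 1 • X := fun d => by
    rw [Pi.smul_apply, smul_eq_mul, ← div_le_iff₀ (hX d)]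
    exact (hc d).trans (le_max_left _ _)
  refine ⟨max c 1 * max M 1, by positivity, fun n d => ?_⟩
  calc F^[n] Y d ≤ (max c 1 * lam ^ n) * X d :=
        hF.iterate_le_smul_of_le_smul hlam (by positivity) hY hYX h n d
    _ ≤ (max c 1 * lam ^ n) * max M 1 := by gcongr; exact (hM d).trans (le_max_left _ _)
    _ = max c 1 * max M 1 * lam ^ n := by ring

theorem exists_le_smul_of_iterate_le (hF : IsOrderPreservingHomogeneous F) {lam : ℝ}
    (hlam : 0 < lam) {Y : D → ℝ} {n : ℕ} (hpos : ∀ j ≤ n, ∀ d, 0 < F^[j] Y d)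
    (hle : F^[n + 1] Y ≤ lam ^ (n + 1) • Y) :
    ∃ X : D → ℝ, (∀ d, 0 < X d) ∧ F X ≤ lam • X := by
  set V : ℕ → D → ℝ := fun j => (lam ^ j)⁻¹ • F^[j] Y with hV
  have hV_nonneg : ∀ j ≤ n, 0 ≤ V j := fun j hj d =>
    mul_nonneg (by positivity) (hpos j hj d).le
  set X := (Finset.range (n + 1)).inf' Finset.nonempty_range_add_one V with hX_def
  have hXV : ∀ j ≤ n, X ≤ V j := fun j hj =>
    Finset.inf'_le _ (Finset.mem_range_succ_iff.2 hj)
  have hX : ∀ d, 0 < X d := fun d => by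
    rw [hX_def, Finset.inf'_apply, Finset.lt_inf'_iff]
    exact fun j hj => mul_pos (by positivity) (hpos j (Finset.mem_range_succ_iff.1 hj) d)
  have hFX : ∀ j ≤ n, F X ≤ (lam ^ j)⁻¹ • F^[j + 1] Y := fun j hj => calc
    F X ≤ F (V j) := hF.monotoneOn (fun d => (hX d).le) (hV_nonneg j hj) (hXV j hj)
    _ = (lam ^ j)⁻¹ • F^[j + 1] Y := by
      rw [hF.map_smul _ (by positivity) _ (fun d => (hpos j hj d).le),
        Function.iterate_succ_apply']
  -- `lam⁻¹ • F X` lies below the term `j + 1` of the minimum by `hFX j`, and below the term `0`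
  -- by `hFX n` and `hle`.
  refine ⟨X, hX, (inv_smul_le_iff_of_pos hlam).1 (Finset.le_inf' _ _ fun j hj => ?_)⟩
  rcases j with _ | j
  · calc lam⁻¹ • F X ≤ lam⁻¹ • (lam ^ n)⁻¹ • F^[n + 1] Y :=
          smul_le_smul_of_nonneg_left (hFX n le_rfl) (by positivity)
      _ ≤ lam⁻¹ • (lam ^ n)⁻¹ • lam ^ (n + 1) • Y := by gcongr
      _ = V 0 := by simp [hV, smul_smul, pow_succ, hlam.ne']
  · calc lam⁻¹ • F X ≤ lam⁻¹ • (lam ^ j)⁻¹ • F^[j + 1] Y :=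
          smul_le_smul_of_nonneg_left
            (hFX j (by simpa using hj : j < n).le) (by positivity)
      _ = V (j + 1) := by rw [hV, smul_smul, ← mul_inv, ← pow_succ']

theorem add_smul_id (hF : IsOrderPreservingHomogeneous F) {ε : ℝ} (hε : 0 ≤ ε) :
    IsOrderPreservingHomogeneous fun X => F X + ε • X where
  mapsTo _ hX := mem_Ici.2 <| add_nonneg (hF.mapsTo hX) (smul_nonneg hε hX)
  monotoneOn _ hX _ hY h := add_le_add (hF.monotoneOn hX hY h) (smul_le_smul_of_nonneg_left h hε)
  map_smul c hc X hX := by rw [hF.map_smul c hc X hX, smul_add, smul_comm c ε]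

theorem tendsto_iterate_add_smul_id (hF : IsOrderPreservingHomogeneous F)
    (hcont : ContinuousOn F (Ici 0)) {Y : D → ℝ} (hY : 0 ≤ Y) :
    ∀ n, Tendsto (fun ε : ℝ => (fun X => F X + ε • X)^[n] Y) (𝓝[≥] 0) (𝓝 (F^[n] Y))
  | 0 => tendsto_const_nhds
  | n + 1 => by
    have ih := tendsto_iterate_add_smul_id hF hcont hY n
    have hmem : ∀ᶠ ε in 𝓝[≥] (0 : ℝ), (fun X => F X + ε • X)^[n] Y ∈ Ici 0 :=
      eventually_mem_nhdsWithin.mono fun ε hε => (hF.add_smul_id hε).iterate_nonneg hY n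
    have hF_comp := (hcont _ (hF.iterate_nonneg hY n)).tendsto.comp
      (tendsto_nhdsWithin_iff.2 ⟨ih, hmem⟩)
    simp only [Function.iterate_succ_apply']
    simpa using hF_comp.add ((tendsto_id.mono_left nhdsWithin_le_nhds).smul ih)

theorem iterate_add_smul_id_pos (hF : IsOrderPreservingHomogeneous F) {ε : ℝ} (hε : 0 < ε)
    {Y : D → ℝ} (hY : ∀ d, 0 < Y d) : ∀ n d, 0 < (fun X => F X + ε • X)^[n] Y d
  | 0 => hY
  | n + 1 => fun d => by
    have ih := iterate_add_smul_id_pos hF hε hY n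
    rw [Function.iterate_succ_apply']
    exact add_pos_of_nonneg_of_pos (hF.mapsTo (fun d => (ih d).le) d) (mul_pos hε (ih d))

theorem exists_le_smul_of_iterate_lt [Finite D] (hF : IsOrderPreservingHomogeneous F)
    (hcont : ContinuousOn F (Ici 0)) {lam : ℝ} (hlam : 0 < lam) {Y : D → ℝ} (hY : ∀ d, 0 < Y d)
    {n : ℕ} (h : ∀ d, F^[n + 1] Y d < lam ^ (n + 1) * Y d) :
    ∃ X : D → ℝ, (∀ d, 0 < X d) ∧ F X ≤ lam • X := by
  have hclose : ∀ᶠ ε in 𝓝[>] (0 : ℝ),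
      (fun X => F X + ε • X)^[n + 1] Y ≤ lam ^ (n + 1) • Y := by
    refine Eventually.filter_mono (nhdsWithin_mono _ Ioi_subset_Ici_self) ?_
    refine eventually_all.2 fun d => ?_
    have hd := ((continuous_apply d).tendsto _).comp
      (hF.tendsto_iterate_add_smul_id hcont (fun d => (hY d).le) (n + 1))
    exact (hd.eventually_lt_const (h d)).mono fun ε hε => hε.le
  obtain ⟨ε, hεY, hε⟩ := (hclose.and self_mem_nhdsWithin).exists
  have hε : 0 < ε := hε
  obtain ⟨X, hX, hGX⟩ :=
    (hF.add_smul_id hε.le).exists_le_smul_of_iterate_le hlam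
      (fun j _ => hF.iterate_add_smul_id_pos hε hY j) hεY
  exact ⟨X, hX, (le_add_of_nonneg_right (smul_nonneg hε.le fun d => (hX d).le)).trans hGX⟩

end IsOrderPreservingHomogeneous

theorem eventually_rpow_one_div_lt {a : ℕ → ℝ} {C lam b : ℝ} (ha : ∀ k, 0 ≤ a k) (hC : 0 < C)
    (hlam : 0 < lam) (hbound : ∀ k, a k ≤ C * lam ^ k) (hb : lam < b) :
    ∀ᶠ k : ℕ in atTop, a k ^ ((1 : ℝ) / k) < b := by
  have hroot : Tendsto (fun k : ℕ => C ^ ((1 : ℝ) / k) * lam) atTop (𝓝 lam) := by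
    simpa using (tendsto_const_nhds.rpow tendsto_one_div_atTop_nhds_zero_nat
      (Or.inl hC.ne')).mul_const lam
  filter_upwards [eventually_gt_atTop 0, hroot.eventually_lt_const hb] with k hk hlt
  calc a k ^ ((1 : ℝ) / k) ≤ (C * lam ^ k) ^ ((1 : ℝ) / k) :=
        Real.rpow_le_rpow (ha k) (hbound k) (by positivity)
    _ = C ^ ((1 : ℝ) / k) * lam := by
      rw [Real.mul_rpow hC.le (by positivity), one_div,
        Real.pow_rpow_inv_natCast hlam.le hk.ne']
    _ < b := hlt

theorem growth_rate_eq_collatzWielandt_inf_general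
    {D : Type*} [Fintype D]
    (F : (D → ℝ) → (D → ℝ))
    (hmaps : ∀ X : D → ℝ, (∀ d, 0 ≤ X d) → ∀ d, 0 ≤ F X d)
    (hcont : ContinuousOn F {X : D → ℝ | ∀ d, 0 ≤ X d})
    (hmono : ∀ X Y : D → ℝ, (∀ d, 0 ≤ X d) → (∀ d, 0 ≤ Y d) →
      (∀ d, X d ≤ Y d) → ∀ d, F X d ≤ F Y d)
    (hhom : ∀ (c : ℝ), 0 < c → ∀ X : D → ℝ, (∀ d, 0 ≤ X d) →
      F (c • X) = c • F X) :
    Tendsto (fun k : ℕ => (⨆ d, F^[k] (fun _ => 1) d) ^ ((1 : ℝ) / k))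
      atTop
      (nhds (sInf {lam : ℝ | 0 < lam ∧
        ∃ X : D → ℝ, (∀ d, 0 < X d) ∧ ∀ d, F X d ≤ lam * X d})) := by
  have hF : IsOrderPreservingHomogeneous F := ⟨hmaps, fun X hX Y hY => hmono X Y hX hY, hhom⟩
  set S := {lam : ℝ | 0 < lam ∧ ∃ X : D → ℝ, (∀ d, 0 < X d) ∧ ∀ d, F X d ≤ lam * X d}
  set A : ℕ → ℝ := fun k => ⨆ d, F^[k] (fun _ => 1) d
  have hA_ge : ∀ k d, F^[k] (fun _ => 1) d ≤ A k := fun k d =>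
    le_ciSup (Finite.bddAbove_range _) d
  have hA_nonneg : ∀ k, 0 ≤ A k := fun k =>
    Real.iSup_nonneg fun d => hF.iterate_nonneg (fun _ => zero_le_one) k d
  have hmem : ∀ lam, 0 < lam → ∀ n, A (n + 1) < lam ^ (n + 1) → lam ∈ S := fun lam hlam n h =>
    ⟨hlam, hF.exists_le_smul_of_iterate_lt hcont hlam (fun _ => one_pos)
      fun d => by simpa using (hA_ge (n + 1) d).trans_lt h⟩
  have hS : S.Nonempty := ⟨A 1 + 1, hmem _ (by linarith [hA_nonneg 1]) 0 (by simp)⟩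
  have hlow : ∀ k, 0 < k → sInf S ≤ A k ^ ((1 : ℝ) / k) := by
    intro k hk
    by_contra! hlt
    obtain ⟨lam, hAlam, hlamS⟩ := exists_between hlt
    have hlam := (Real.rpow_nonneg (hA_nonneg k) _).trans_lt hAlam
    rw [one_div, Real.rpow_inv_lt_iff_of_pos (hA_nonneg k) hlam.le (by positivity),
      Real.rpow_natCast] at hAlam
    obtain ⟨n, rfl⟩ := Nat.exists_eq_add_one_of_ne_zero hk.ne'
    exact hlamS.not_ge (csInf_le ⟨0, fun _ h => h.1.le⟩ (hmem lam hlam n hAlam))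
  refine tendsto_order.2 ⟨fun b hb => ?_, fun b hb => ?_⟩
  · filter_upwards [eventually_gt_atTop 0] with k hk using hb.trans_le (hlow k hk)
  · obtain ⟨lam, ⟨hlam, X, hX, hFX⟩, hlamb⟩ := exists_lt_of_csInf_lt hS hb
    obtain ⟨C, hC, hbound⟩ := hF.exists_iterate_le_mul_pow hlam hX (fun _ => zero_le_one) hFX
    exact eventually_rpow_one_div_lt hA_nonneg hC hlam
      (fun k => Real.iSup_le (hbound k) (by positivity)) hlamb

/-- For a continuous, order preserving, positively homogeneous
(degree 1) self-map F of the nonnegative orthant ℝ₊^D, the limit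
lim_{k→∞} (max_d (F^k e)_d)^{1/k} exists and equals
inf { λ > 0 : ∃ X > 0 with F(X) ≤ λX }. -/
theorem growth_rate_eq_collatzWielandt_inf
    {D : Type*} [Fintype D] [Nonempty D]
    (F : (D → ℝ) → (D → ℝ))
    (hmaps : ∀ X : D → ℝ, (∀ d, 0 ≤ X d) → ∀ d, 0 ≤ F X d)
    (hcont : ContinuousOn F {X : D → ℝ | ∀ d, 0 ≤ X d})
    (hmono : ∀ X Y : D → ℝ, (∀ d, 0 ≤ X d) → (∀ d, 0 ≤ Y d) →
      (∀ d, X d ≤ Y d) → ∀ d, F X d ≤ F Y d)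
    (hhom : ∀ (c : ℝ), 0 < c → ∀ X : D → ℝ, (∀ d, 0 ≤ X d) →
      F (c • X) = c • F X) :
    Tendsto (fun k : ℕ => (⨆ d, F^[k] (fun _ => 1) d) ^ ((1 : ℝ) / k))
      atTop
      (nhds (sInf {lam : ℝ | 0 < lam ∧
        ∃ X : D → ℝ, (∀ d, 0 < X d) ∧ ∀ d, F X d ≤ lam * X d})) :=
  growth_rate_eq_collatzWielandt_inf_general F hmaps hcont hmono hhom
end

section
/- Let F : ℝ₊^D → ℝ₊^D be continuous, order preserving, and positively homogeneous of degree 1. Then the set Λ = { λ ≥ 0 : there exists X ∈ ℝ₊^D \ {0} with F(X) = λ X } is nonempty and has a greatest element λ*, and λ* = inf { λ > 0 : there exists X ∈ int ℝ₊^D with F(X) ≤ λ X }. -/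
open Filter Finset Topology

lemma aux_simplex_compact {D : Type*} [Fintype D] [Nonempty D] :
    IsCompact {X : D → ℝ | (∀ d, 0 ≤ X d) ∧ ∑ d, X d = 1} := by
  apply Metric.isCompact_of_isClosed_isBounded
  · have h1 : IsClosed {X : D → ℝ | ∀ d, 0 ≤ X d} := by
      have : {X : D → ℝ | ∀ d, 0 ≤ X d} = ⋂ d, {X | 0 ≤ X d} := by ext; simp [Set.mem_iInter]
      rw [this]
      exact isClosed_iInter fun d => isClosed_le continuous_const (continuous_apply d)
    have h2 : IsClosed {X : D → ℝ | ∑ d, X d = 1} :=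
      isClosed_eq (by continuity) continuous_const
    exact h1.inter h2
  · rw [isBounded_iff_forall_norm_le]
    refine ⟨1, fun X hX => ?_⟩
    rw [pi_norm_le_iff_of_nonneg zero_le_one]
    intro d
    rw [Real.norm_eq_abs, abs_le]
    constructor
    · linarith [hX.1 d]
    · calc X d ≤ ∑ d', X d' := Finset.single_le_sum (fun i _ => hX.1 i) (mem_univ d)
        _ = 1 := hX.2

lemma aux_tendsto_comp {D : Type*} [Fintype D] [Nonempty D]
    (G : (D → ℝ) → (D → ℝ))
    (hcont : ContinuousOn G {X : D → ℝ | ∀ d, 0 ≤ X d})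
    {W : ℕ → D → ℝ} {X : D → ℝ} (hW : ∀ n d, 0 ≤ W n d)
    (hX : ∀ d, 0 ≤ X d) (h : Tendsto W atTop (𝓝 X)) :
    Tendsto (fun n => G (W n)) atTop (𝓝 (G X)) :=
  Filter.Tendsto.comp (hcont X hX)
    (tendsto_nhdsWithin_iff.2 ⟨h, Eventually.of_forall fun n => hW n⟩)

lemma aux_compare {D : Type*} [Fintype D] [Nonempty D]
    (F : (D → ℝ) → (D → ℝ))
    (hmono : ∀ X Y : D → ℝ, (∀ d, 0 ≤ X d) → (∀ d, 0 ≤ Y d) →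
      (∀ d, X d ≤ Y d) → ∀ d, F X d ≤ F Y d)
    (hhom : ∀ (c : ℝ), 0 < c → ∀ X : D → ℝ, (∀ d, 0 ≤ X d) →
      F (c • X) = c • F X)
    {lam mu : ℝ} {X Y : D → ℝ} (hX0 : ∀ d, 0 ≤ X d) (hXne : X ≠ 0)
    (hXeig : ∀ d, F X d = lam * X d) (hY : ∀ d, 0 < Y d)
    (hYsub : ∀ d, F Y d ≤ mu * Y d) : lam ≤ mu := by
  obtain ⟨d₀, -, hd₀⟩ := Finset.exists_max_image Finset.univ (fun d => X d / Y d) univ_nonempty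
  set t := X d₀ / Y d₀ with ht
  have hXle : ∀ d, X d ≤ t * Y d := by
    intro d
    have := hd₀ d (mem_univ d)
    calc X d = (X d / Y d) * Y d := (div_mul_cancel₀ _ (hY d).ne').symm
      _ ≤ t * Y d := by nlinarith [hY d]
  have htpos : 0 < t := by
    obtain ⟨d₁, hd₁⟩ : ∃ d, X d ≠ 0 := by
      by_contra h
      push_neg at h
      exact hXne (funext h)
    have h1 : 0 < X d₁ := lt_of_le_of_ne (hX0 d₁) (Ne.symm hd₁)
    have := hd₀ d₁ (mem_univ d₁)
    have : 0 < X d₁ / Y d₁ := div_pos h1 (hY d₁)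
    linarith [hd₀ d₁ (mem_univ d₁)]
  have hXd₀ : X d₀ = t * Y d₀ := by
    rw [ht, div_mul_cancel₀ _ (hY d₀).ne']
  have key : lam * X d₀ ≤ t * (mu * Y d₀) := by
    calc lam * X d₀ = F X d₀ := (hXeig d₀).symm
      _ ≤ F (t • Y) d₀ := hmono X (t • Y) hX0
          (fun d => by simp only [Pi.smul_apply, smul_eq_mul]; exact mul_nonneg htpos.le (hY d).le)
          (fun d => by simpa using hXle d) d₀
      _ = t * F Y d₀ := by rw [hhom t htpos Y (fun d => (hY d).le)]; simp
      _ ≤ t * (mu * Y d₀) := by nlinarith [hYsub d₀]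
  rw [hXd₀] at key
  have hty : 0 < t * Y d₀ := mul_pos htpos (hY d₀)
  nlinarith

section AuxCW
variable {D : Type*} [Fintype D] [Nonempty D]

lemma aux_posmap (G : (D → ℝ) → (D → ℝ)) (δ : ℝ) (hδ : 0 < δ)
    (hcont : ContinuousOn G {X : D → ℝ | ∀ d, 0 ≤ X d})
    (hmono : ∀ X Y : D → ℝ, (∀ d, 0 ≤ X d) → (∀ d, 0 ≤ Y d) →
      (∀ d, X d ≤ Y d) → ∀ d, G X d ≤ G Y d)
    (hhom : ∀ (c : ℝ), 0 < c → ∀ X : D → ℝ, (∀ d, 0 ≤ X d) → G (c • X) = c • G X)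
    (hlow : ∀ X : D → ℝ, (∀ d, 0 ≤ X d) → ∀ d, δ * ∑ d', X d' ≤ G X d) :
    ∃ Y : D → ℝ, (∀ d, 0 ≤ Y d) ∧ (∑ d, Y d = 1) ∧
      δ ≤ sInf {lam : ℝ | 0 < lam ∧ ∃ X : D → ℝ, (∀ d, 0 < X d) ∧ ∀ d, G X d ≤ lam * X d} ∧
      (∀ d, G Y d =
        sInf {lam : ℝ | 0 < lam ∧ ∃ X : D → ℝ, (∀ d, 0 < X d) ∧ ∀ d, G X d ≤ lam * X d}
          * Y d) := by
  classical
  set SG := {lam : ℝ | 0 < lam ∧ ∃ X : D → ℝ, (∀ d, 0 < X d) ∧ ∀ d, G X d ≤ lam * X d}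
    with hSGdef
  have hGnonneg : ∀ X : D → ℝ, (∀ d, 0 ≤ X d) → ∀ d, 0 ≤ G X d := by
    intro X hX d
    have h1 := hlow X hX d
    have hs : 0 ≤ ∑ d', X d' := Finset.sum_nonneg fun i _ => hX i
    nlinarith
  -- SG is nonempty
  have hSGne : SG.Nonempty := by
    set M := (Finset.univ.sup' univ_nonempty (fun d => G (fun _ => 1) d)) + 1 with hM
    have hMpos : 0 < M := by
      have h0 : (0:ℝ) ≤ G (fun _ => 1) (Classical.arbitrary D) :=
        hGnonneg _ (fun _ => zero_le_one) _
      have h1 := Finset.le_sup' (fun d => G (fun _ => (1:ℝ)) d)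
        (mem_univ (Classical.arbitrary D))
      rw [hM]; linarith
    refine ⟨M, hMpos, fun _ => 1, fun _ => one_pos, fun d => ?_⟩
    have h1 := Finset.le_sup' (fun d => G (fun _ => (1:ℝ)) d) (mem_univ d)
    rw [hM]; simp only [mul_one]; linarith
  -- δ is a lower bound for SG
  have hδle : ∀ lam ∈ SG, δ ≤ lam := by
    rintro lam ⟨hlam, X, hXpos, hXsub⟩
    obtain ⟨d₀, -, hd₀⟩ := Finset.exists_max_image Finset.univ X univ_nonempty
    have hsum_pos : 0 < ∑ d', X d' := Finset.sum_pos (fun i _ => hXpos i) univ_nonempty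
    have h1 : δ * ∑ d', X d' ≤ lam * X d₀ :=
      le_trans (hlow X (fun d => (hXpos d).le) d₀) (hXsub d₀)
    have h2 : X d₀ ≤ ∑ d', X d' := Finset.single_le_sum (fun i _ => (hXpos i).le) (mem_univ d₀)
    nlinarith
  have hbdd : BddBelow SG := ⟨δ, hδle⟩
  set lam₀ := sInf SG with hlam₀
  have hlam₀δ : δ ≤ lam₀ := le_csInf hSGne hδle
  have hlam₀pos : 0 < lam₀ := lt_of_lt_of_le hδ hlam₀δ
  -- a strictly positive sub-eigenvector at lam₀ + 1/(n+1), normalized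
  have hexists : ∀ n : ℕ, ∃ W : D → ℝ, (∀ d, 0 < W d) ∧ (∑ d, W d = 1) ∧
      ∀ d, G W d ≤ (lam₀ + 1/(n+1)) * W d := by
    intro n
    have hlt : lam₀ < lam₀ + 1/(n+1) := lt_add_of_pos_right _ (by positivity)
    obtain ⟨lam, hlamSG, hlam_lt⟩ := exists_lt_of_csInf_lt hSGne hlt
    obtain ⟨hlampos, X, hXpos, hXsub⟩ := hlamSG
    have hsum : 0 < ∑ d', X d' := Finset.sum_pos (fun i _ => hXpos i) univ_nonempty
    refine ⟨(∑ d', X d')⁻¹ • X, fun d => mul_pos (inv_pos.2 hsum) (hXpos d), ?_, ?_⟩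
    · simp only [Pi.smul_apply, smul_eq_mul]
      rw [← Finset.mul_sum, inv_mul_cancel₀ hsum.ne']
    · intro d
      have h1 : G ((∑ d', X d')⁻¹ • X) d = (∑ d', X d')⁻¹ * G X d := by
        rw [hhom _ (inv_pos.2 hsum) X (fun d => (hXpos d).le)]
        simp
      rw [h1]
      have h2 := hXsub d
      have h3 : lam * X d ≤ (lam₀ + 1/(n+1)) * X d :=
        mul_le_mul_of_nonneg_right hlam_lt.le (hXpos d).le
      have hinv : (0:ℝ) ≤ (∑ d', X d')⁻¹ := by positivity
      have h4 := mul_le_mul_of_nonneg_left (h2.trans h3) hinv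
      simp only [Pi.smul_apply, smul_eq_mul]
      calc (∑ d', X d')⁻¹ * G X d ≤ (∑ d', X d')⁻¹ * ((lam₀ + 1/(n+1)) * X d) := h4
        _ = (lam₀ + 1/(n+1)) * ((∑ d', X d')⁻¹ * X d) := by ring
  choose W hWpos hWsum hWsub using hexists
  obtain ⟨X, hXmem, φ, hφ, hφtend⟩ :=
    aux_simplex_compact.tendsto_subseq (x := W) (fun n => ⟨fun d => (hWpos n d).le, hWsum n⟩)
  have hXnonneg : ∀ d, 0 ≤ X d := hXmem.1
  have hXsum : ∑ d, X d = 1 := hXmem.2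
  -- G X ≤ lam₀ X in the limit
  have hGXten : Tendsto (fun n => G (W (φ n))) atTop (𝓝 (G X)) :=
    aux_tendsto_comp G hcont (fun n d => (hWpos (φ n) d).le) hXnonneg hφtend
  have hGX : ∀ d, G X d ≤ lam₀ * X d := by
    intro d
    have hL : Tendsto (fun n => G (W (φ n)) d) atTop (𝓝 (G X d)) :=
      tendsto_pi_nhds.1 hGXten d
    have hone : Tendsto (fun n : ℕ => (1:ℝ)/(φ n+1)) atTop (𝓝 0) :=
      tendsto_one_div_add_atTop_nhds_zero_nat.comp hφ.tendsto_atTop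
    have hR : Tendsto (fun n => (lam₀ + 1/(φ n+1)) * W (φ n) d) atTop (𝓝 (lam₀ * X d)) := by
      have := (tendsto_const_nhds (x := lam₀) (f := atTop (α := ℕ))).add hone
      rw [add_zero] at this
      exact this.mul (tendsto_pi_nhds.1 hφtend d)
    exact le_of_tendsto_of_tendsto' hL hR (fun n => hWsub (φ n) d)
  have hXpos : ∀ d, 0 < X d := by
    intro d
    have h1 : δ * ∑ d', X d' ≤ lam₀ * X d := le_trans (hlow X hXnonneg d) (hGX d)
    rw [hXsum, mul_one] at h1
    nlinarith
  -- the decreasing iteration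
  set T : (D → ℝ) → (D → ℝ) := fun V => lam₀⁻¹ • G V with hT
  set Y : ℕ → D → ℝ := fun k => T^[k] X with hYdef
  have hY0 : Y 0 = X := rfl
  have hYsucc : ∀ k, Y (k+1) = lam₀⁻¹ • G (Y k) := by
    intro k
    simp only [hYdef, Function.iterate_succ_apply', hT]
  have hYpos : ∀ k d, 0 < Y k d := by
    intro k
    induction k with
    | zero => exact hXpos
    | succ k ih =>
      intro d
      have h1 := hlow (Y k) (fun d => (ih d).le) d
      have hsum : 0 < ∑ d', Y k d' := Finset.sum_pos (fun i _ => ih i) univ_nonempty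
      have h2 : 0 < G (Y k) d := lt_of_lt_of_le (by positivity) h1
      rw [hYsucc k]
      simp only [Pi.smul_apply, smul_eq_mul]
      exact mul_pos (inv_pos.2 hlam₀pos) h2
  have hGYd : ∀ k d, G (Y k) d = lam₀ * Y (k+1) d := by
    intro k d
    rw [hYsucc k]
    simp only [Pi.smul_apply, smul_eq_mul]
    field_simp
  have hYanti : ∀ k d, Y (k+1) d ≤ Y k d := by
    intro k
    induction k with
    | zero =>
      intro d
      rw [hYsucc 0, hY0]
      simp only [Pi.smul_apply, smul_eq_mul]
      rw [inv_mul_le_iff₀ hlam₀pos]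
      exact (hGX d).trans_eq (by ring)
    | succ k ih =>
      intro d
      have e1 : Y (k+1+1) d = lam₀⁻¹ * G (Y (k+1)) d := by
        rw [hYsucc (k+1)]; simp
      have e2 : Y (k+1) d = lam₀⁻¹ * G (Y k) d := by
        rw [hYsucc k]; simp
      rw [e1, e2]
      have := hmono (Y (k+1)) (Y k) (fun d => (hYpos (k+1) d).le) (fun d => (hYpos k d).le) ih d
      exact mul_le_mul_of_nonneg_left this (inv_pos.2 hlam₀pos).le
  set L : D → ℝ := fun d => ⨅ k, Y k d with hLdef
  have hLtend : ∀ d, Tendsto (fun k => Y k d) atTop (𝓝 (L d)) := by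
    intro d
    apply tendsto_atTop_ciInf (antitone_nat_of_succ_le (fun k => hYanti k d))
    exact ⟨0, by rintro x ⟨k, rfl⟩; exact (hYpos k d).le⟩
  have hLnonneg : ∀ d, 0 ≤ L d := fun d => le_ciInf fun k => (hYpos k d).le
  have hLten : Tendsto Y atTop (𝓝 L) := tendsto_pi_nhds.2 hLtend
  have hGL : G L = lam₀ • L := by
    have h1 : Tendsto (fun k => G (Y k)) atTop (𝓝 (G L)) :=
      aux_tendsto_comp G hcont (fun k d => (hYpos k d).le) hLnonneg hLten
    have h2 : (fun k => G (Y k)) = fun k => lam₀ • Y (k+1) := by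
      funext k
      rw [hYsucc k, smul_smul, mul_inv_cancel₀ hlam₀pos.ne', one_smul]
    have h3 : Tendsto (fun k => lam₀ • Y (k+1)) atTop (𝓝 (lam₀ • L)) :=
      ((hLten.comp (tendsto_add_atTop_nat 1))).const_smul lam₀
    rw [h2] at h1
    exact tendsto_nhds_unique h1 h3
  by_cases hL0 : L = 0
  · -- contradiction via the min trick
    exfalso
    have hev : ∀ᶠ k in atTop, ∀ d, Y k d ≤ X d / 2 := by
      rw [Filter.eventually_all]
      intro d
      have h1 : Tendsto (fun k => Y k d) atTop (𝓝 0) := by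
        have := hLtend d
        rwa [hL0] at this
      exact h1.eventually_le_const (by linarith [hXpos d])
    obtain ⟨k, hkhalf, hk1⟩ := (hev.and (eventually_ge_atTop 1)).exists
    have hkpos : 0 < k := hk1
    set c : ℝ := (2/3 : ℝ) ^ ((k:ℝ)⁻¹) with hcdef
    have hc0 : 0 < c := Real.rpow_pos_of_pos (by norm_num) _
    have hc1 : c < 1 := Real.rpow_lt_one (by norm_num) (by norm_num)
      (inv_pos.2 (by exact_mod_cast hkpos))
    have hkne : (k:ℝ) ≠ 0 := Nat.cast_ne_zero.2 hkpos.ne'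
    have hck : c ^ k = 2/3 := by
      rw [hcdef, ← Real.rpow_natCast ((2/3 : ℝ) ^ ((k:ℝ)⁻¹)) k, ← Real.rpow_mul (by norm_num),
        inv_mul_cancel₀ hkne, Real.rpow_one]
    have hrne : (Finset.range k).Nonempty := Finset.nonempty_range_iff.2 hkpos.ne'
    set Z : D → ℝ := fun d => (Finset.range k).inf' hrne (fun j => (c ^ j)⁻¹ * Y j d) with hZdef
    have hZpos : ∀ d, 0 < Z d := by
      intro d
      rw [hZdef]
      rw [Finset.lt_inf'_iff]
      intro j _
      exact mul_pos (inv_pos.2 (pow_pos hc0 j)) (hYpos j d)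
    have hZle : ∀ j, j < k → ∀ d, Z d ≤ (c ^ j)⁻¹ * Y j d :=
      fun j hj d => Finset.inf'_le _ (Finset.mem_range.2 hj)
    have hstep : ∀ j, j < k → ∀ d, G Z d ≤ (c ^ j)⁻¹ * (lam₀ * Y (j+1) d) := by
      intro j hj d
      have h1 : ∀ d, ((c ^ j)⁻¹ • Y j) d = (c ^ j)⁻¹ * Y j d := by
        intro d; simp
      have h2 : G Z d ≤ G ((c ^ j)⁻¹ • Y j) d := by
        apply hmono Z _ (fun d => (hZpos d).le)
          (fun d => by rw [h1]; exact mul_nonneg (inv_pos.2 (pow_pos hc0 j)).le (hYpos j d).le)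
        intro d; rw [h1]; exact hZle j hj d
      have h3 : G ((c ^ j)⁻¹ • Y j) d = (c ^ j)⁻¹ * G (Y j) d := by
        rw [hhom _ (inv_pos.2 (pow_pos hc0 j)) (Y j) (fun d => (hYpos j d).le)]
        simp
      rw [h3, hGYd j d] at h2
      exact h2
    have hGZ : ∀ d, G Z d ≤ (c * lam₀) * Z d := by
      intro d
      obtain ⟨j₀, hj₀mem, hj₀eq⟩ :=
        Finset.exists_mem_eq_inf' hrne (fun j => (c ^ j)⁻¹ * Y j d)
      have hj₀k : j₀ < k := Finset.mem_range.1 hj₀mem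
      match j₀, hj₀eq with
      | 0, hj₀eq =>
        have hZd : Z d = (c ^ 0)⁻¹ * Y 0 d := hj₀eq
        simp only [pow_zero, inv_one, one_mul, hY0] at hZd
        have hk1k : k - 1 < k := by omega
        have h4 := hstep (k-1) hk1k d
        rw [Nat.sub_add_cancel hk1] at h4
        have hpow : c ^ (k-1) * c = c ^ k := by
          rw [← pow_succ, Nat.sub_add_cancel hk1]
        have hpowpos : 0 < c ^ (k-1) := pow_pos hc0 _
        have h5 : lam₀ * Y k d ≤ lam₀ * (X d / 2) :=
          mul_le_mul_of_nonneg_left (hkhalf d) hlam₀pos.le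
        have h6 : G Z d ≤ (c ^ (k-1))⁻¹ * (lam₀ * (X d / 2)) :=
          h4.trans (mul_le_mul_of_nonneg_left h5 (inv_pos.2 hpowpos).le)
        have h7 : (c ^ (k-1))⁻¹ = (3/2) * c := by
          have : c ^ (k-1) = (2/3) / c := by
            field_simp
            nlinarith [hpow, hck]
          rw [this]
          field_simp
        rw [h7] at h6
        rw [hZd]
        nlinarith [hXpos d, mul_pos hc0 hlam₀pos]
      | (j'+1), hj₀eq =>
        have hj' : j' < k := by omega
        have h4 := hstep j' hj' d
        have h5 : (c ^ j')⁻¹ * (lam₀ * Y (j'+1) d) =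
            (c * lam₀) * ((c ^ (j'+1))⁻¹ * Y (j'+1) d) := by
          rw [pow_succ]
          have hcj : (0:ℝ) < c ^ j' := pow_pos hc0 j'
          field_simp
        rw [h5] at h4
        have hZd : Z d = (c ^ (j'+1))⁻¹ * Y (j'+1) d := hj₀eq
        rw [hZd]
        exact h4
    have hmem : c * lam₀ ∈ SG := ⟨mul_pos hc0 hlam₀pos, Z, hZpos, hGZ⟩
    have := csInf_le hbdd hmem
    rw [← hlam₀] at this
    nlinarith
  · -- L is a nonzero eigenvector; normalize it
    obtain ⟨d₁, hd₁⟩ : ∃ d, L d ≠ 0 := by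
      by_contra h
      push_neg at h
      exact hL0 (funext h)
    have hsum : 0 < ∑ d, L d :=
      Finset.sum_pos' (fun i _ => hLnonneg i)
        ⟨d₁, mem_univ d₁, lt_of_le_of_ne (hLnonneg d₁) (Ne.symm hd₁)⟩
    refine ⟨(∑ d, L d)⁻¹ • L, fun d => by
        simp only [Pi.smul_apply, smul_eq_mul]
        exact mul_nonneg (inv_pos.2 hsum).le (hLnonneg d), ?_, hlam₀δ, ?_⟩
    · simp only [Pi.smul_apply, smul_eq_mul]
      rw [← Finset.mul_sum, inv_mul_cancel₀ hsum.ne']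
    · intro d
      have h1 : G ((∑ d, L d)⁻¹ • L) d = (∑ d, L d)⁻¹ * G L d := by
        rw [hhom _ (inv_pos.2 hsum) L hLnonneg]
        simp
      rw [h1, hGL]
      simp only [Pi.smul_apply, smul_eq_mul]
      ring

end AuxCW

/-- For a continuous, order preserving, positively homogeneous
(degree 1) self-map F of ℝ₊^D, the set of nonnegative nonlinear eigenvalues
Λ = { λ ≥ 0 : ∃ X ∈ ℝ₊^D \ {0}, F(X) = λX } is nonempty, has a greatest
element λ*, and λ* = inf { λ > 0 : ∃ X > 0 with F(X) ≤ λX }. -/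
theorem collatzWielandt_eigenvalue_exists
    {D : Type*} [Fintype D] [Nonempty D]
    (F : (D → ℝ) → (D → ℝ))
    (hmaps : ∀ X : D → ℝ, (∀ d, 0 ≤ X d) → ∀ d, 0 ≤ F X d)
    (hcont : ContinuousOn F {X : D → ℝ | ∀ d, 0 ≤ X d})
    (hmono : ∀ X Y : D → ℝ, (∀ d, 0 ≤ X d) → (∀ d, 0 ≤ Y d) →
      (∀ d, X d ≤ Y d) → ∀ d, F X d ≤ F Y d)
    (hhom : ∀ (c : ℝ), 0 < c → ∀ X : D → ℝ, (∀ d, 0 ≤ X d) →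
      F (c • X) = c • F X) :
    ∃ lamstar : ℝ,
      IsGreatest {lam : ℝ | 0 ≤ lam ∧ ∃ X : D → ℝ,
        (∀ d, 0 ≤ X d) ∧ X ≠ 0 ∧ (∀ d, F X d = lam * X d)} lamstar ∧
      lamstar = sInf {lam : ℝ | 0 < lam ∧
        ∃ X : D → ℝ, (∀ d, 0 < X d) ∧ ∀ d, F X d ≤ lam * X d} := by
  classical
  set S := {lam : ℝ | 0 < lam ∧ ∃ X : D → ℝ, (∀ d, 0 < X d) ∧ ∀ d, F X d ≤ lam * X d}
    with hSdef
  have hSne : S.Nonempty := by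
    set M := (Finset.univ.sup' univ_nonempty (fun d => F (fun _ => 1) d)) + 1 with hM
    have hMpos : 0 < M := by
      have h0 : (0:ℝ) ≤ F (fun _ => 1) (Classical.arbitrary D) :=
        hmaps _ (fun _ => zero_le_one) _
      have h1 := Finset.le_sup' (fun d => F (fun _ => (1:ℝ)) d)
        (mem_univ (Classical.arbitrary D))
      rw [hM]; linarith
    refine ⟨M, hMpos, fun _ => 1, fun _ => one_pos, fun d => ?_⟩
    have h1 := Finset.le_sup' (fun d => F (fun _ => (1:ℝ)) d) (mem_univ d)
    rw [hM]; simp only [mul_one]; linarith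
  have hSbdd : BddBelow S := ⟨0, fun lam hlam => hlam.1.le⟩
  set lamstar := sInf S with hls
  have hlamstar0 : 0 ≤ lamstar := le_csInf hSne fun lam hlam => hlam.1.le
  -- the perturbed maps
  set G : ℕ → (D → ℝ) → (D → ℝ) :=
    fun n X d => F X d + (1/((n:ℝ)+1)) * ∑ d', X d' with hGdef
  have hGapp : ∀ n X d, G n X d = F X d + (1/((n:ℝ)+1)) * ∑ d', X d' := fun n X d => rfl
  have hmain : ∀ n : ℕ, ∃ Y : D → ℝ, (∀ d, 0 ≤ Y d) ∧ (∑ d, Y d = 1) ∧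
      (1/((n:ℝ)+1)) ≤
        sInf {lam : ℝ | 0 < lam ∧ ∃ X : D → ℝ, (∀ d, 0 < X d) ∧ ∀ d, G n X d ≤ lam * X d} ∧
      (∀ d, G n Y d =
        sInf {lam : ℝ | 0 < lam ∧ ∃ X : D → ℝ, (∀ d, 0 < X d) ∧ ∀ d, G n X d ≤ lam * X d}
          * Y d) := by
    intro n
    apply aux_posmap (G n) (1/((n:ℝ)+1)) (by positivity)
    · -- continuity
      have h1 : Continuous (fun X : D → ℝ => fun d : D => (1/((n:ℝ)+1)) * ∑ d', X d') :=
        continuous_pi fun _ =>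
          continuous_const.mul (continuous_finset_sum _ fun i _ => continuous_apply i)
      exact ContinuousOn.add hcont h1.continuousOn
    · -- monotone
      intro X Y hX hY hXY d
      simp only [hGapp]
      have h1 := hmono X Y hX hY hXY d
      have h2 : ∑ d', X d' ≤ ∑ d', Y d' := Finset.sum_le_sum (fun i _ => hXY i)
      have h3 : (0:ℝ) ≤ 1/((n:ℝ)+1) := by positivity
      nlinarith
    · -- homogeneous
      intro s hs X hX
      funext d
      have h1 : F (s • X) d = s * F X d := by rw [hhom s hs X hX]; simp
      simp only [hGapp, Pi.smul_apply, smul_eq_mul, h1]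
      rw [← Finset.mul_sum]
      ring
    · -- lower bound
      intro X hX d
      simp only [hGapp]
      have h1 := hmaps X hX d
      linarith
  choose Y hYnn hYsum hlamnδ hYeig using hmain
  set lamn : ℕ → ℝ := fun n =>
    sInf {lam : ℝ | 0 < lam ∧ ∃ X : D → ℝ, (∀ d, 0 < X d) ∧ ∀ d, G n X d ≤ lam * X d}
    with hlamn
  have hlamnpos : ∀ n, 0 < lamn n := fun n => lt_of_lt_of_le (by positivity) (hlamnδ n)
  have hlamnY : ∀ (n : ℕ) (d : D), (1/((n:ℝ)+1)) ≤ lamn n * Y n d := by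
    intro n d
    have h1 := hYeig n d
    rw [hGapp] at h1
    have h2 : ∑ d', Y n d' = 1 := hYsum n
    rw [h2, mul_one] at h1
    have h3 := hmaps (Y n) (hYnn n) d
    rw [← h1]
    linarith
  have hYpos : ∀ n d, 0 < Y n d := by
    intro n d
    have h1 := hlamnY n d
    have h2 := hlamnpos n
    have h3 : (0:ℝ) < 1/((n:ℝ)+1) := by positivity
    nlinarith
  have hFYle : ∀ (n : ℕ) (d : D), F (Y n) d ≤ lamn n * Y n d := by
    intro n d
    rw [← hYeig n d, hGapp]
    have h1 : (0:ℝ) ≤ (1/((n:ℝ)+1)) * ∑ d', Y n d' :=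
      mul_nonneg (by positivity) (Finset.sum_nonneg fun i _ => hYnn n i)
    linarith
  have hge : ∀ n, lamstar ≤ lamn n := fun n =>
    csInf_le hSbdd ⟨hlamnpos n, Y n, hYpos n, hFYle n⟩
  -- upper bounds for lamn
  have hub : ∀ mu ∈ S, ∃ Cmu : ℝ, ∀ n : ℕ, lamn n ≤ mu + Cmu * (1/((n:ℝ)+1)) := by
    rintro mu ⟨hmupos, Xmu, hXmupos, hXmusub⟩
    set m := Finset.univ.inf' univ_nonempty Xmu with hm
    have hmpos : 0 < m := by
      rw [hm, Finset.lt_inf'_iff]; exact fun i _ => hXmupos i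
    set Cmu := (∑ d, Xmu d) / m with hCmu
    have hsumpos : 0 < ∑ d, Xmu d := Finset.sum_pos (fun i _ => hXmupos i) univ_nonempty
    have hCpos : 0 < Cmu := div_pos hsumpos hmpos
    refine ⟨Cmu, fun n => ?_⟩
    have hn1 : (0:ℝ) < 1/((n:ℝ)+1) := by positivity
    have hmem : mu + Cmu * (1/((n:ℝ)+1)) ∈
        {lam : ℝ | 0 < lam ∧ ∃ X : D → ℝ, (∀ d, 0 < X d) ∧ ∀ d, G n X d ≤ lam * X d} := by
      refine ⟨by positivity, Xmu, hXmupos, fun d => ?_⟩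
      rw [hGapp]
      have h2 : m ≤ Xmu d := Finset.inf'_le _ (mem_univ d)
      have h3 : Cmu * m = ∑ d', Xmu d' := by
        rw [hCmu]; exact div_mul_cancel₀ _ hmpos.ne'
      have h5 := mul_le_mul_of_nonneg_left h2 (mul_pos hCpos hn1).le
      have h6 : Cmu * (1/((n:ℝ)+1)) * m = (1/((n:ℝ)+1)) * ∑ d', Xmu d' := by
        rw [← h3]; ring
      have h4 := hXmusub d
      have h7 : (mu + Cmu * (1/((n:ℝ)+1))) * Xmu d
          = mu * Xmu d + Cmu * (1/((n:ℝ)+1)) * Xmu d := by ring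
      rw [h7]
      linarith
    exact csInf_le ⟨0, fun lam hlam => hlam.1.le⟩ hmem
  -- convergence of lamn to lamstar
  have htends : Tendsto lamn atTop (𝓝 lamstar) := by
    refine tendsto_order.2 ⟨fun a ha => Eventually.of_forall fun n =>
      lt_of_lt_of_le ha (hge n), fun a ha => ?_⟩
    obtain ⟨mu, hmuS, hmua⟩ := exists_lt_of_csInf_lt hSne ha
    obtain ⟨Cmu, hCle⟩ := hub mu hmuS
    have h1 : Tendsto (fun n : ℕ => mu + Cmu * (1/((n:ℝ)+1))) atTop (𝓝 mu) := by
      have h2 := tendsto_one_div_add_atTop_nhds_zero_nat.const_mul Cmu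
      have h3 := (tendsto_const_nhds (x := mu) (f := atTop (α := ℕ))).add h2
      simpa using h3
    filter_upwards [h1.eventually_lt_const hmua] with n hn
    exact lt_of_le_of_lt (hCle n) hn
  -- extract a convergent subsequence of eigenvectors
  obtain ⟨Xs, hXsmem, φ, hφ, hφtend⟩ :=
    aux_simplex_compact.tendsto_subseq (x := Y)
      (fun n => ⟨fun d => (hYpos n d).le, hYsum n⟩)
  have hXsnn : ∀ d, 0 ≤ Xs d := hXsmem.1
  have hFten : Tendsto (fun n => F (Y (φ n))) atTop (𝓝 (F Xs)) :=
    aux_tendsto_comp F hcont (fun n d => (hYpos (φ n) d).le) hXsnn hφtend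
  have hEq : ∀ n : ℕ, (fun d => F (Y n) d) = fun d => lamn n * Y n d - (1/((n:ℝ)+1)) := by
    intro n
    funext d
    have h1 := hYeig n d
    rw [hGapp] at h1
    have h2 : ∑ d', Y n d' = 1 := hYsum n
    rw [h2, mul_one] at h1
    linarith
  have hRten : Tendsto (fun n => fun d => lamn (φ n) * Y (φ n) d - (1/((φ n:ℝ)+1)))
      atTop (𝓝 (fun d => lamstar * Xs d)) := by
    rw [tendsto_pi_nhds]
    intro d
    have h1 : Tendsto (fun n => lamn (φ n) * Y (φ n) d) atTop (𝓝 (lamstar * Xs d)) :=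
      (htends.comp hφ.tendsto_atTop).mul (tendsto_pi_nhds.1 hφtend d)
    have h2 : Tendsto (fun n : ℕ => (1:ℝ)/((φ n:ℝ)+1)) atTop (𝓝 0) :=
      tendsto_one_div_add_atTop_nhds_zero_nat.comp hφ.tendsto_atTop
    simpa using h1.sub h2
  have hF : F Xs = fun d => lamstar * Xs d := by
    refine tendsto_nhds_unique ?_ hRten
    have h1 : (fun n => F (Y (φ n)))
        = fun n => fun d => lamn (φ n) * Y (φ n) d - 1/((φ n:ℝ)+1) := by
      funext n
      have := hEq (φ n)
      simpa using this
    rw [← h1]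
    exact hFten
  have hXsne : Xs ≠ 0 := by
    intro h
    have h1 := hXsmem.2
    rw [h] at h1
    simp at h1
  refine ⟨lamstar, ⟨⟨hlamstar0, Xs, hXsnn, hXsne, fun d => congrFun hF d⟩, ?_⟩, hls⟩
  rintro lam ⟨hlam0, Xl, hXl0, hXlne, hXleig⟩
  apply le_csInf hSne
  rintro mu ⟨hmupos, Ymu, hYmupos, hYmusub⟩
  exact aux_compare F hmono hhom hXl0 hXlne hXleig hYmupos hYmusub
end

section
/- Let F : ℝ₊^D → ℝ₊^D be continuous, order preserving, and positively homogeneous of degree 1. Then the set { λ ≥ 0 : there exists X ∈ ℝ₊^D \ {0} with F(X) ≥ λ X } has a greatest element, and this greatest element equals the greatest element of the set { λ ≥ 0 : there exists X ∈ ℝ₊^D \ {0} with F(X) = λ X }. -/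
/-!
Perturb `F` to `F_δ X = F X + δ (∑ X) • 1`, which is strictly increasing in every coordinate
along `X < Y`. For such a map the Collatz–Wielandt value `L` is attained on the standard simplex
by compactness, and at a maximizer `X` the inequality `L • X ≤ F_δ X` is an equality: otherwise
`Y = F_δ X` satisfies `L • Y ≪ F_δ Y`, so a slightly larger value would still be admissible.
The eigenpairs `(L_δ, X_δ)` stay in a compact set for `δ ≤ 1`, and each `L_δ` bounds the
Collatz–Wielandt set of `F` from above; a limit point as `δ → 0` is an eigenpair of `F` with
this property.
-/

open Set Filter Topology

namespace CollatzWielandt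

variable {D : Type*} {F : (D → ℝ) → D → ℝ}

def superEigenvalues (F : (D → ℝ) → D → ℝ) : Set ℝ :=
  {lam | 0 ≤ lam ∧ ∃ X, 0 ≤ X ∧ X ≠ 0 ∧ lam • X ≤ F X}

def IsPosHomogeneous (F : (D → ℝ) → D → ℝ) : Prop :=
  ∀ c : ℝ, 0 < c → ∀ X, 0 ≤ X → F (c • X) = c • F X

lemma superEigenvalues_mono {G : (D → ℝ) → D → ℝ} (h : ∀ X, 0 ≤ X → F X ≤ G X) :
    superEigenvalues F ⊆ superEigenvalues G :=
  fun _ ⟨hlam, X, hX, hXne, hle⟩ => ⟨hlam, X, hX, hXne, hle.trans (h X hX)⟩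

lemma exists_gt_smul_le_of_strongLT [Finite D] {L : ℝ} {Y Z : D → ℝ}
    (h : StrongLT (L • Y) Z) : ∃ t > L, t • Y ≤ Z := by
  have hnhds : ∀ᶠ t in 𝓝 L, ∀ d, t * Y d < Z d := eventually_all.2 fun d =>
    (continuous_mul_const (Y d)).continuousAt.eventually_lt continuousAt_const (h d)
  obtain ⟨t, ht, hLt⟩ := ((hnhds.filter_mono nhdsWithin_le_nhds).and
    (self_mem_nhdsWithin (s := Ioi L))).exists
  exact ⟨t, hLt, fun d => (ht d).le⟩

lemma ne_zero_of_mem_stdSimplex [Fintype D] {X : D → ℝ} (hX : X ∈ stdSimplex ℝ D) : X ≠ 0 := by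
  rintro rfl
  simpa using hX.2

namespace IsPosHomogeneous

lemma map_zero (hhom : IsPosHomogeneous F) : F 0 = 0 := by
  simpa [two_smul] using hhom 2 two_pos 0 le_rfl

lemma map_smul_of_nonneg (hhom : IsPosHomogeneous F) {c : ℝ} (hc : 0 ≤ c) {X : D → ℝ}
    (hX : 0 ≤ X) : F (c • X) = c • F X := by
  rcases hc.eq_or_lt with rfl | hc
  · simp [hhom.map_zero]
  · exact hhom c hc X hX

lemma map_nonneg (hhom : IsPosHomogeneous F) (hmono : MonotoneOn F (Ici 0)) {X : D → ℝ}
    (hX : 0 ≤ X) : 0 ≤ F X :=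
  hhom.map_zero ▸ hmono self_mem_Ici hX hX

lemma exists_mem_stdSimplex_smul_le [Fintype D] (hhom : IsPosHomogeneous F) {lam : ℝ}
    {X : D → ℝ} (hX : 0 ≤ X) (hXne : X ≠ 0) (hle : lam • X ≤ F X) :
    ∃ Y ∈ stdSimplex ℝ D, lam • Y ≤ F Y := by
  have hsum : 0 < ∑ d, X d := Fintype.sum_pos (lt_of_le_of_ne hX hXne.symm)
  refine ⟨(∑ d, X d)⁻¹ • X, ⟨fun d => ?_, ?_⟩, ?_⟩
  · exact mul_nonneg (inv_nonneg.2 hsum.le) (hX d)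
  · simp [← Finset.mul_sum, hsum.ne']
  · rw [hhom _ (inv_pos.2 hsum) X hX, smul_comm]
    exact smul_le_smul_of_nonneg_left hle (inv_nonneg.2 hsum.le)

end IsPosHomogeneous

lemma le_sum_of_smul_le [Fintype D] (hmono : MonotoneOn F (Ici 0)) {lam : ℝ} {X : D → ℝ}
    (hX : X ∈ stdSimplex ℝ D) (hle : lam • X ≤ F X) : lam ≤ ∑ d, F 1 d :=
  calc lam = ∑ d, lam * X d := by rw [← Finset.mul_sum, hX.2, mul_one]
    _ ≤ ∑ d, F X d := Finset.sum_le_sum fun d _ => hle d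
    _ ≤ ∑ d, F 1 d := Finset.sum_le_sum fun d _ =>
      hmono hX.1 (mem_Ici.2 zero_le_one) (stdSimplex_subset_Icc ℝ hX).2 d

lemma exists_isGreatest_superEigenvalues [Fintype D] [Nonempty D]
    (hmono : MonotoneOn F (Ici 0)) (hhom : IsPosHomogeneous F) (hcont : ContinuousOn F (Ici 0)) :
    ∃ L X, IsGreatest (superEigenvalues F) L ∧ X ∈ stdSimplex ℝ D ∧ L • X ≤ F X := by
  classical
  have hbox : IsCompact (Icc 0 (∑ d, F 1 d) ×ˢ stdSimplex ℝ D) :=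
    isCompact_Icc.prod (isCompact_stdSimplex ℝ D)
  set K := {p ∈ Icc 0 (∑ d, F 1 d) ×ˢ stdSimplex ℝ D | p.1 • p.2 ≤ F p.2}
  have hK : IsCompact K := hbox.of_isClosed_subset
    (hbox.isClosed.isClosed_le (continuous_fst.smul continuous_snd).continuousOn
      (hcont.comp continuous_snd.continuousOn fun p hp => hp.2.1)) (sep_subset _ _)
  obtain ⟨d⟩ := ‹Nonempty D›
  have hK0 : ((0 : ℝ), Pi.single d 1) ∈ K := by
    refine ⟨⟨⟨le_rfl, ?_⟩, single_mem_stdSimplex ℝ d⟩, ?_⟩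
    · exact Finset.sum_nonneg fun d _ => hhom.map_nonneg hmono zero_le_one d
    · simpa using hhom.map_nonneg hmono (single_mem_stdSimplex ℝ d).1
  obtain ⟨⟨L, X⟩, ⟨⟨⟨hL, -⟩, hX⟩, hLX⟩, hmax⟩ :=
    hK.exists_isMaxOn ⟨_, hK0⟩ continuous_fst.continuousOn
  refine ⟨L, X, ⟨⟨hL, X, hX.1, ne_zero_of_mem_stdSimplex hX, hLX⟩, ?_⟩, hX, hLX⟩
  rintro lam ⟨hlam, Y, hY, hYne, hle⟩
  obtain ⟨Z, hZ, hZle⟩ := hhom.exists_mem_stdSimplex_smul_le hY hYne hle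
  exact hmax (show (lam, Z) ∈ K from ⟨⟨⟨hlam, le_sum_of_smul_le hmono hZ hZle⟩, hZ⟩, hZle⟩)

lemma eq_smul_of_isGreatest_superEigenvalues [Finite D] (hhom : IsPosHomogeneous F)
    (hstrict : ∀ X Y, 0 ≤ X → X < Y → StrongLT (F X) (F Y)) {L : ℝ}
    (hL : IsGreatest (superEigenvalues F) L) {X : D → ℝ} (hX : 0 ≤ X) (hle : L • X ≤ F X) :
    F X = L • X := by
  by_contra hne
  have hLX : L • X < F X := lt_of_le_of_ne hle (Ne.symm hne)
  have hLY : StrongLT (L • F X) (F (F X)) := by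
    simpa [hhom.map_smul_of_nonneg hL.1.1 hX] using hstrict _ _ (smul_nonneg hL.1.1 hX) hLX
  obtain ⟨t, hLt, ht⟩ := exists_gt_smul_le_of_strongLT hLY
  have hY : 0 < F X := (smul_nonneg hL.1.1 hX).trans_lt hLX
  exact hLt.not_ge (hL.2 ⟨hL.1.1.trans hLt.le, F X, hY.le, hY.ne', ht⟩)

section Perturbation

variable [Fintype D]

def perturb (F : (D → ℝ) → D → ℝ) (δ : ℝ) (X : D → ℝ) : D → ℝ :=
  F X + (δ * ∑ d, X d) • 1

lemma perturb_zero : perturb F 0 = F := by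
  ext X d
  simp [perturb]

lemma perturb_le_perturb {δ δ' : ℝ} (hδ : δ ≤ δ') {X : D → ℝ} (hX : 0 ≤ X) :
    perturb F δ X ≤ perturb F δ' X :=
  add_le_add_right (smul_le_smul_of_nonneg_right
    (mul_le_mul_of_nonneg_right hδ (Finset.sum_nonneg fun d _ => hX d)) zero_le_one) _

lemma monotoneOn_perturb (hmono : MonotoneOn F (Ici 0)) {δ : ℝ} (hδ : 0 ≤ δ) :
    MonotoneOn (perturb F δ) (Ici 0) := fun _ hX _ hY hXY =>
  add_le_add (hmono hX hY hXY) (smul_le_smul_of_nonneg_right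
    (mul_le_mul_of_nonneg_left (Finset.sum_le_sum fun d _ => hXY d) hδ) zero_le_one)

lemma strongLT_perturb (hmono : MonotoneOn F (Ici 0)) {δ : ℝ} (hδ : 0 < δ) {X Y : D → ℝ}
    (hX : 0 ≤ X) (hXY : X < Y) : StrongLT (perturb F δ X) (perturb F δ Y) := fun d => by
  have hsum : δ * ∑ d, X d < δ * ∑ d, Y d :=
    mul_lt_mul_of_pos_left (Fintype.sum_strictMono hXY) hδ
  simpa [perturb] using add_lt_add_of_le_of_lt (hmono hX (hX.trans hXY.le) hXY.le d) hsum

lemma isPosHomogeneous_perturb (hhom : IsPosHomogeneous F) (δ : ℝ) :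
    IsPosHomogeneous (perturb F δ) := by
  intro c hc X hX
  simp only [perturb, hhom c hc X hX, smul_add, smul_smul, Pi.smul_apply, smul_eq_mul,
    ← Finset.mul_sum]
  ring_nf

lemma continuousOn_perturb (hcont : ContinuousOn F (Ici 0)) :
    ContinuousOn (fun p : ℝ × (D → ℝ) => perturb F p.1 p.2) (univ ×ˢ Ici 0) :=
  (hcont.comp continuous_snd.continuousOn fun _ hp => hp.2).add (by fun_prop)

lemma eq_smul_of_tendsto_perturb (hcont : ContinuousOn F (Ici 0)) {ι : Type*} {l : Filter ι}
    [l.NeBot] {δ lam : ι → ℝ} {X : ι → D → ℝ} {μ : ℝ} {Y : D → ℝ} (hX : ∀ i, 0 ≤ X i)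
    (hδ : Tendsto δ l (𝓝 0)) (hlam : Tendsto lam l (𝓝 μ)) (hXY : Tendsto X l (𝓝 Y))
    (heq : ∀ i, perturb F (δ i) (X i) = lam i • X i) : F Y = μ • Y := by
  have hY : 0 ≤ Y := isClosed_Ici.mem_of_tendsto hXY (Eventually.of_forall hX)
  have hlim := (continuousOn_perturb hcont (0, Y) ⟨mem_univ _, hY⟩).tendsto.comp
    (tendsto_nhdsWithin_iff.2
      ⟨hδ.prodMk_nhds hXY, Eventually.of_forall fun i => ⟨mem_univ _, hX i⟩⟩)
  rw [← perturb_zero (F := F)]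
  exact tendsto_nhds_unique (hlim.congr heq) (hlam.smul hXY)

lemma exists_perturb_eigenvector [Nonempty D] (hmono : MonotoneOn F (Ici 0))
    (hhom : IsPosHomogeneous F) (hcont : ContinuousOn F (Ici 0)) {δ : ℝ} (hδ : 0 < δ)
    (hδ1 : δ ≤ 1) :
    ∃ p ∈ Icc 0 (∑ d, perturb F 1 1 d) ×ˢ stdSimplex ℝ D,
      p.1 ∈ upperBounds (superEigenvalues F) ∧ perturb F δ p.2 = p.1 • p.2 := by
  obtain ⟨L, X, hL, hX, hLX⟩ :=
    exists_isGreatest_superEigenvalues (monotoneOn_perturb hmono hδ.le)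
      (isPosHomogeneous_perturb hhom δ) ((continuousOn_perturb hcont).comp
        (continuousOn_const.prodMk continuousOn_id) fun _ hX => ⟨mem_univ _, hX⟩)
  refine ⟨(L, X), ⟨⟨hL.1.1, ?_⟩, hX⟩, fun lam hlam => hL.2 ?_, ?_⟩
  · exact le_sum_of_smul_le (monotoneOn_perturb hmono zero_le_one) hX
      (hLX.trans (perturb_le_perturb hδ1 hX.1))
  · refine superEigenvalues_mono (fun Y hY => ?_) hlam
    simpa only [perturb_zero] using perturb_le_perturb (F := F) hδ.le hY
  · exact eq_smul_of_isGreatest_superEigenvalues (isPosHomogeneous_perturb hhom δ)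
      (fun _ _ hX hXY => strongLT_perturb hmono hδ hX hXY) hL hX.1 hLX

end Perturbation

end CollatzWielandt

open CollatzWielandt

theorem collatzWielandt_superEigen_eq_eigen_general
    {D : Type*} [Fintype D] [Nonempty D]
    (F : (D → ℝ) → (D → ℝ))
    (hcont : ContinuousOn F {X : D → ℝ | ∀ d, 0 ≤ X d})
    (hmono : ∀ X Y : D → ℝ, (∀ d, 0 ≤ X d) → (∀ d, 0 ≤ Y d) →
      (∀ d, X d ≤ Y d) → ∀ d, F X d ≤ F Y d)
    (hhom : ∀ (c : ℝ), 0 < c → ∀ X : D → ℝ, (∀ d, 0 ≤ X d) →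
      F (c • X) = c • F X) :
    ∃ lamstar : ℝ,
      IsGreatest {lam : ℝ | 0 ≤ lam ∧ ∃ X : D → ℝ,
        (∀ d, 0 ≤ X d) ∧ X ≠ 0 ∧ (∀ d, lam * X d ≤ F X d)} lamstar ∧
      IsGreatest {lam : ℝ | 0 ≤ lam ∧ ∃ X : D → ℝ,
        (∀ d, 0 ≤ X d) ∧ X ≠ 0 ∧ (∀ d, F X d = lam * X d)} lamstar := by
  have hmono' : MonotoneOn F (Ici 0) := fun X hX Y hY hXY => hmono X Y hX hY hXY
  choose p hpK hpub hpeq using fun k : ℕ => exists_perturb_eigenvector hmono' hhom hcont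
    (Nat.one_div_pos_of_nat (n := k)) (div_le_one_of_le₀ (by simp) (by positivity))
  obtain ⟨⟨μ, Y⟩, ⟨⟨hμ, -⟩, hY⟩, φ, hφ, hlim⟩ :=
    (isCompact_Icc.prod (isCompact_stdSimplex ℝ D)).tendsto_subseq hpK
  have hFY : F Y = μ • Y := eq_smul_of_tendsto_perturb hcont (fun k => (hpK (φ k)).2.1)
    (tendsto_one_div_add_atTop_nhds_zero_nat.comp hφ.tendsto_atTop) hlim.fst_nhds hlim.snd_nhds
    fun k => hpeq (φ k)
  have hub : μ ∈ upperBounds (superEigenvalues F) := fun lam hlam =>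
    ge_of_tendsto' hlim.fst_nhds fun k => hpub (φ k) hlam
  have hYne := ne_zero_of_mem_stdSimplex hY
  refine ⟨μ, ⟨⟨hμ, Y, hY.1, hYne, hFY.ge⟩, hub⟩,
    ⟨hμ, Y, hY.1, hYne, fun d => congrFun hFY d⟩, ?_⟩
  rintro lam ⟨hlam, X, hX, hXne, hFX⟩
  exact hub ⟨hlam, X, hX, hXne, fun d => (hFX d).ge⟩

/-- For a continuous, order preserving, positively homogeneous
(degree 1) self-map F of ℝ₊^D, the set
{ λ ≥ 0 : ∃ X ∈ ℝ₊^D \ {0}, F(X) ≥ λX } has a greatest element, and it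
coincides with the greatest element of
{ λ ≥ 0 : ∃ X ∈ ℝ₊^D \ {0}, F(X) = λX }. -/
theorem collatzWielandt_superEigen_eq_eigen
    {D : Type*} [Fintype D] [Nonempty D]
    (F : (D → ℝ) → (D → ℝ))
    (hmaps : ∀ X : D → ℝ, (∀ d, 0 ≤ X d) → ∀ d, 0 ≤ F X d)
    (hcont : ContinuousOn F {X : D → ℝ | ∀ d, 0 ≤ X d})
    (hmono : ∀ X Y : D → ℝ, (∀ d, 0 ≤ X d) → (∀ d, 0 ≤ Y d) →
      (∀ d, X d ≤ Y d) → ∀ d, F X d ≤ F Y d)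
    (hhom : ∀ (c : ℝ), 0 < c → ∀ X : D → ℝ, (∀ d, 0 ≤ X d) →
      F (c • X) = c • F X) :
    ∃ lamstar : ℝ,
      IsGreatest {lam : ℝ | 0 ≤ lam ∧ ∃ X : D → ℝ,
        (∀ d, 0 ≤ X d) ∧ X ≠ 0 ∧ (∀ d, lam * X d ≤ F X d)} lamstar ∧
      IsGreatest {lam : ℝ | 0 ≤ lam ∧ ∃ X : D → ℝ,
        (∀ d, 0 ≤ X d) ∧ X ≠ 0 ∧ (∀ d, F X d = lam * X d)} lamstar :=
  collatzWielandt_superEigen_eq_eigen_general F hcont hmono hhom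
end

section
/- Let F : ℝ₊^D → ℝ₊^D be order preserving and positively homogeneous of degree 1. If λ > 0 and U ∈ int ℝ₊^D satisfy F(U) ≤ λ U, then for every d ∈ D, limsup_{k→∞} ((F^k(e))_d)^{1/k} ≤ λ. -/
open Filter

/-- If F is order preserving and positively homogeneous of degree 1
on ℝ₊^D and F(U) ≤ λU for some λ > 0 and positive vector U, then for every
coordinate d, limsup_k ((F^k e)_d)^{1/k} ≤ λ. -/
theorem limsup_growth_le_of_subEigen
    {D : Type*} [Fintype D] [Nonempty D]
    (F : (D → ℝ) → (D → ℝ))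
    (hmaps : ∀ X : D → ℝ, (∀ d, 0 ≤ X d) → ∀ d, 0 ≤ F X d)
    (hmono : ∀ X Y : D → ℝ, (∀ d, 0 ≤ X d) → (∀ d, 0 ≤ Y d) →
      (∀ d, X d ≤ Y d) → ∀ d, F X d ≤ F Y d)
    (hhom : ∀ (c : ℝ), 0 < c → ∀ X : D → ℝ, (∀ d, 0 ≤ X d) →
      F (c • X) = c • F X)
    (lam : ℝ) (hlam : 0 < lam) (U : D → ℝ) (hU : ∀ d, 0 < U d)
    (hsub : ∀ d, F U d ≤ lam * U d) (d : D) :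
    Filter.limsup (fun k : ℕ => (F^[k] (fun _ => 1) d) ^ ((1 : ℝ) / k))
      atTop ≤ lam := by
  classical
  -- choose c with 1 ≤ c * U d for all d
  obtain ⟨d₀, hd₀⟩ := Finset.exists_min_image Finset.univ U ⟨Classical.arbitrary D, Finset.mem_univ _⟩
  set c : ℝ := (U d₀)⁻¹ with hc
  have hc0 : 0 < c := inv_pos.mpr (hU d₀)
  have hce : ∀ e, (1 : ℝ) ≤ c * U e := by
    intro e
    rw [hc, inv_mul_eq_div, le_div_iff₀ (hU d₀)]
    simpa using hd₀.2 e (Finset.mem_univ e)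
  -- main induction
  have key : ∀ k : ℕ, (∀ e, 0 ≤ F^[k] (fun _ => 1) e) ∧
      (∀ e, F^[k] (fun _ => 1) e ≤ lam ^ k * c * U e) := by
    intro k
    induction k with
    | zero =>
      refine ⟨fun e => zero_le_one, fun e => ?_⟩
      simpa using hce e
    | succ n ih =>
      obtain ⟨ih0, ihle⟩ := ih
      have hpos : 0 < lam ^ n * c := mul_pos (pow_pos hlam n) hc0
      have hFle : ∀ e, F (F^[n] (fun _ => 1)) e ≤ F ((lam ^ n * c) • U) e := by
        intro e
        refine hmono _ _ ih0 (fun e => ?_) (fun e => ?_) e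
        · exact le_of_lt (smul_pos hpos (hU e))
        · simpa [smul_eq_mul] using ihle e
      have hF0 : ∀ e, 0 ≤ F^[n+1] (fun _ => 1) e := by
        intro e
        rw [Function.iterate_succ_apply']
        exact hmaps _ ih0 e
      refine ⟨hF0, fun e => ?_⟩
      rw [Function.iterate_succ_apply']
      calc F (F^[n] (fun _ => 1)) e ≤ F ((lam ^ n * c) • U) e := hFle e
        _ = (lam ^ n * c) * F U e := by
            rw [hhom _ hpos U (fun e => (hU e).le)]; simp [smul_eq_mul]
        _ ≤ (lam ^ n * c) * (lam * U e) := by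
            exact mul_le_mul_of_nonneg_left (hsub e) hpos.le
        _ = lam ^ (n+1) * c * U e := by ring
  -- bound the rpow sequence eventually
  have hbound : ∀ᶠ k : ℕ in atTop,
      (F^[k] (fun _ => 1) d) ^ ((1 : ℝ) / k) ≤ lam * (c * U d) ^ ((1 : ℝ) / k) := by
    filter_upwards [eventually_ge_atTop 1] with k hk
    have hk0 : (k : ℝ) ≠ 0 := Nat.cast_ne_zero.mpr (by omega)
    have h1 : (F^[k] (fun _ => 1) d) ^ ((1 : ℝ) / k) ≤
        (lam ^ k * (c * U d)) ^ ((1 : ℝ) / k) := by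
      apply Real.rpow_le_rpow ((key k).1 d)
      · have := (key k).2 d; linarith [this]
      · exact div_nonneg zero_le_one (Nat.cast_nonneg k)
    refine h1.trans_eq ?_
    rw [Real.mul_rpow (pow_pos hlam k).le (mul_pos hc0 (hU d)).le]
    congr 1
    rw [← Real.rpow_natCast lam k, ← Real.rpow_mul hlam.le]
    rw [mul_one_div, div_self hk0, Real.rpow_one]
  -- the RHS tends to lam
  have htend : Tendsto (fun k : ℕ => lam * (c * U d) ^ ((1 : ℝ) / k)) atTop (nhds lam) := by
    have hcU : (0 : ℝ) < c * U d := mul_pos hc0 (hU d)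
    have h1 : Tendsto (fun k : ℕ => (c * U d) ^ ((1 : ℝ) / k)) atTop (nhds 1) := by
      have := (Filter.Tendsto.rpow (tendsto_const_nhds (x := c * U d) (f := atTop))
        tendsto_one_div_atTop_nhds_zero_nat (Or.inl hcU.ne'))
      simpa using this
    have := h1.const_mul lam
    simpa using this
  calc limsup (fun k : ℕ => (F^[k] (fun _ => 1) d) ^ ((1 : ℝ) / k)) atTop
      ≤ limsup (fun k : ℕ => lam * (c * U d) ^ ((1 : ℝ) / k)) atTop := by
        refine limsup_le_limsup hbound ?_ ?_
        · refine IsCoboundedUnder.of_frequently_ge (a := 0) ?_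
          apply Eventually.frequently
          filter_upwards with k
          exact Real.rpow_nonneg ((key k).1 d) _
        · exact htend.isBoundedUnder_le
    _ = lam := htend.limsup_eq
end

section
/- Let F : ℝ₊^D → ℝ₊^D be order preserving and positively homogeneous of degree 1. If λ ≥ 0 and X ∈ ℝ₊^D \ {0} satisfy F(X) ≥ λ X, then for every d ∈ D with X_d > 0, liminf_{k→∞} ((F^k(e))_d)^{1/k} ≥ λ. -/
open Filter

/-- If F is order preserving and positively homogeneous of degree 1
on ℝ₊^D and F(X) ≥ λX for some λ ≥ 0 and nonzero nonnegative vector X, then for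
every coordinate d with X_d > 0, liminf_k ((F^k e)_d)^{1/k} ≥ λ. -/
theorem liminf_growth_ge_of_superEigen
    {D : Type*} [Fintype D] [Nonempty D]
    (F : (D → ℝ) → (D → ℝ))
    (hmaps : ∀ X : D → ℝ, (∀ d, 0 ≤ X d) → ∀ d, 0 ≤ F X d)
    (hmono : ∀ X Y : D → ℝ, (∀ d, 0 ≤ X d) → (∀ d, 0 ≤ Y d) →
      (∀ d, X d ≤ Y d) → ∀ d, F X d ≤ F Y d)
    (hhom : ∀ (c : ℝ), 0 < c → ∀ X : D → ℝ, (∀ d, 0 ≤ X d) →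
      F (c • X) = c • F X)
    (lam : ℝ) (hlam : 0 ≤ lam) (X : D → ℝ) (hX : ∀ d, 0 ≤ X d) (hX0 : X ≠ 0)
    (hsup : ∀ d, lam * X d ≤ F X d) (d : D) (hd : 0 < X d) :
    lam ≤ Filter.liminf (fun k : ℕ => (F^[k] (fun _ => 1) d) ^ ((1 : ℝ) / k))
      atTop := by
  set e : D → ℝ := fun _ => 1 with he
  have he_nonneg : ∀ i, (0:ℝ) ≤ e i := fun i => zero_le_one
  -- iterates preserve nonnegativity
  have hiter_nonneg : ∀ (k : ℕ) (Y : D → ℝ), (∀ i, 0 ≤ Y i) → ∀ i, 0 ≤ F^[k] Y i := by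
    intro k
    induction k with
    | zero => intro Y hY i; simpa using hY i
    | succ k ih =>
        intro Y hY i
        rw [Function.iterate_succ_apply']
        exact hmaps _ (ih Y hY) i
  -- iterates are monotone on nonnegative vectors
  have hiter_mono : ∀ (k : ℕ) (Y Z : D → ℝ), (∀ i, 0 ≤ Y i) → (∀ i, 0 ≤ Z i) →
      (∀ i, Y i ≤ Z i) → ∀ i, F^[k] Y i ≤ F^[k] Z i := by
    intro k
    induction k with
    | zero => intro Y Z _ _ h i; simpa using h i
    | succ k ih =>
        intro Y Z hY hZ h i
        rw [Function.iterate_succ_apply', Function.iterate_succ_apply']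
        exact hmono _ _ (hiter_nonneg k Y hY) (hiter_nonneg k Z hZ) (ih Y Z hY hZ h) i
  -- iterates are homogeneous
  have hiter_hom : ∀ (k : ℕ) (c : ℝ), 0 < c → ∀ Y : D → ℝ, (∀ i, 0 ≤ Y i) →
      F^[k] (c • Y) = c • F^[k] Y := by
    intro k
    induction k with
    | zero => intro c hc Y hY; simp
    | succ k ih =>
        intro c hc Y hY
        rw [Function.iterate_succ_apply', Function.iterate_succ_apply', ih c hc Y hY,
          hhom c hc _ (hiter_nonneg k Y hY)]
  -- lower bound: lam^k * X ≤ F^[k] X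
  have hlower : ∀ (k : ℕ) (i : D), lam ^ k * X i ≤ F^[k] X i := by
    intro k
    induction k with
    | zero => intro i; simp
    | succ k ih =>
        intro i
        rw [Function.iterate_succ_apply']
        rcases eq_or_lt_of_le hlam with h0 | hpos
        · have hz : lam ^ (k+1) = 0 := by rw [← h0]; simp
          rw [hz, zero_mul]
          exact hmaps _ (hiter_nonneg k X hX) i
        · have hk : (0:ℝ) < lam ^ k := pow_pos hpos k
          have hle : ∀ j, (lam ^ k • X) j ≤ F^[k] X j := by
            intro j
            simpa [smul_eq_mul] using ih j
          have h3 : F (lam ^ k • X) i ≤ F (F^[k] X) i :=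
            hmono _ _ (fun j => by
                simpa [smul_eq_mul] using mul_nonneg hk.le (hX j))
              (hiter_nonneg k X hX) hle i
          have h4 : F (lam ^ k • X) = lam ^ k • F X := hhom _ hk X hX
          calc lam ^ (k+1) * X i = lam ^ k * (lam * X i) := by ring
            _ ≤ lam ^ k * F X i := mul_le_mul_of_nonneg_left (hsup i) hk.le
            _ = F (lam ^ k • X) i := by rw [h4]; simp [smul_eq_mul]
            _ ≤ F (F^[k] X) i := h3
  -- c such that X ≤ c • e
  set c : ℝ := ∑ i, X i with hc
  have hc0 : 0 < c :=
    lt_of_lt_of_le hd (Finset.single_le_sum (fun i _ => hX i) (Finset.mem_univ d))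
  have hXc : ∀ j, X j ≤ (c • e) j := by
    intro j
    simp only [Pi.smul_apply, he, smul_eq_mul, mul_one]
    exact Finset.single_le_sum (fun i _ => hX i) (Finset.mem_univ j)
  -- key inequality : lam^k * X d ≤ c * F^[k] e d
  have hkey : ∀ k : ℕ, lam ^ k * X d ≤ c * F^[k] e d := by
    intro k
    calc lam ^ k * X d ≤ F^[k] X d := hlower k d
      _ ≤ F^[k] (c • e) d := hiter_mono k X (c • e) hX
          (fun j => by simpa [he, smul_eq_mul] using hc0.le) hXc d
      _ = c * F^[k] e d := by rw [hiter_hom k c hc0 e he_nonneg]; simp [smul_eq_mul]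
  -- upper bound C for the sequence
  set C : ℝ := 1 + ∑ i, F e i with hC
  have hC1 : (1:ℝ) ≤ C := le_add_of_nonneg_right
    (Finset.sum_nonneg fun i _ => hmaps e he_nonneg i)
  have hC0 : (0:ℝ) < C := lt_of_lt_of_le one_pos hC1
  have hFeC : ∀ i, F e i ≤ C := by
    intro i
    calc F e i ≤ ∑ j, F e j :=
          Finset.single_le_sum (fun j _ => hmaps e he_nonneg j) (Finset.mem_univ i)
      _ ≤ C := by rw [hC]; linarith
  have hCk : ∀ (k : ℕ) (i : D), F^[k] e i ≤ C ^ k := by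
    intro k
    induction k with
    | zero => intro i; simp [he]
    | succ k ih =>
        intro i
        have hCkpos : (0:ℝ) < C ^ k := pow_pos hC0 k
        rw [Function.iterate_succ_apply']
        calc F (F^[k] e) i ≤ F (C ^ k • e) i :=
              hmono _ _ (hiter_nonneg k e he_nonneg)
                (fun j => by simpa [he, smul_eq_mul] using hCkpos.le)
                (fun j => by simpa [he, smul_eq_mul] using ih j) i
          _ = C ^ k * F e i := by rw [hhom _ hCkpos e he_nonneg]; simp [smul_eq_mul]
          _ ≤ C ^ k * C := mul_le_mul_of_nonneg_left (hFeC i) hCkpos.le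
          _ = C ^ (k+1) := by ring
  -- the sequence
  set u : ℕ → ℝ := fun k => (F^[k] e d) ^ ((1:ℝ) / k) with hu
  -- coboundedness of u
  have hub : ∀ᶠ k in atTop, u k ≤ C := by
    filter_upwards [eventually_ge_atTop 1] with k hk
    have hk0 : (k:ℝ) ≠ 0 := Nat.cast_ne_zero.2 (by omega)
    have h1 : u k ≤ (C ^ k) ^ ((1:ℝ)/k) :=
      Real.rpow_le_rpow (hiter_nonneg k e he_nonneg d) (hCk k d)
        (by positivity)
    have h2 : (C ^ k) ^ ((1:ℝ)/k) = C := by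
      rw [← Real.rpow_natCast C k, ← Real.rpow_mul hC0.le]
      rw [mul_one_div, div_self hk0, Real.rpow_one]
    rw [h2] at h1
    exact h1
  have hcob : IsCoboundedUnder (· ≥ ·) atTop u :=
    Filter.isCoboundedUnder_ge_of_eventually_le atTop hub
  -- b and the lower comparison sequence
  set b : ℝ := X d / c with hb
  have hb0 : 0 < b := div_pos hd hc0
  have hvle : ∀ᶠ k : ℕ in atTop, lam * b ^ ((1:ℝ)/(k:ℝ)) ≤ u k := by
    filter_upwards [eventually_ge_atTop 1] with k hk
    have hk0 : (k:ℝ) ≠ 0 := Nat.cast_ne_zero.2 (by omega)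
    have h1 : lam ^ k * b ≤ F^[k] e d := by
      rw [hb, mul_div_assoc', div_le_iff₀ hc0, mul_comm (F^[k] e d) c]
      exact hkey k
    have h2 : (lam ^ k * b) ^ ((1:ℝ)/k) ≤ u k :=
      Real.rpow_le_rpow (mul_nonneg (pow_nonneg hlam k) hb0.le) h1 (by positivity)
    have h3 : (lam ^ k * b) ^ ((1:ℝ)/k) = lam * b ^ ((1:ℝ)/k) := by
      rw [Real.mul_rpow (pow_nonneg hlam k) hb0.le, ← Real.rpow_natCast lam k,
        ← Real.rpow_mul hlam, mul_one_div, div_self hk0, Real.rpow_one]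
    rw [h3] at h2
    exact h2
  -- the comparison sequence tends to lam
  have htend : Tendsto (fun k : ℕ => lam * b ^ ((1:ℝ)/k)) atTop (nhds lam) := by
    have h1 : Tendsto (fun k : ℕ => (1:ℝ) / k) atTop (nhds 0) :=
      tendsto_one_div_atTop_nhds_zero_nat
    have h2 : Tendsto (fun k : ℕ => b ^ ((1:ℝ)/k)) atTop (nhds (b ^ (0:ℝ))) :=
      Filter.Tendsto.rpow tendsto_const_nhds h1 (Or.inl hb0.ne')
    rw [Real.rpow_zero] at h2
    simpa using tendsto_const_nhds.mul h2
  -- conclude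
  refine le_of_forall_lt fun a ha => ?_
  obtain ⟨a', ha1, ha2⟩ := exists_between ha
  refine lt_of_lt_of_le ha1 (Filter.le_liminf_of_le hcob ?_)
  filter_upwards [hvle, htend.eventually (eventually_gt_nhds ha2)] with k h1 h2
  exact le_trans h2.le h1
end

section
/- Let F : ℝ₊^D → ℝ₊^D be order preserving and positively homogeneous of degree 1. If λ > 0 and U ∈ int ℝ₊^D satisfy F(U) = λ U, then for every d ∈ D the limit lim_{k→∞} ((F^k(e))_d)^{1/k} exists and equals λ. In particular, the per-coordinate growth rate of F^k(e) is the same for every coordinate. -/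
/-!
Squeeze `e` between two multiples of the positive eigenvector: `(min U)⁻¹ • U ≥ e ≥ (max U)⁻¹ • U`.
Monotonicity and homogeneity carry this through the iterates, so `F^[k] e` is pinned between
`a * λ ^ k` and `b * λ ^ k` coordinatewise with `a, b > 0`, and the constants disappear under the
`k`-th root.
-/

open Filter

theorem tendsto_mul_pow_rpow_one_div {c lam : ℝ} (hc : 0 < c) (hlam : 0 ≤ lam) :
    Tendsto (fun k : ℕ => (c * lam ^ k) ^ ((1 : ℝ) / k)) atTop (nhds lam) := by
  have hroot : Tendsto (fun k : ℕ => c ^ ((1 : ℝ) / k)) atTop (nhds 1) := by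
    simpa [Function.comp_def] using (Real.continuousAt_const_rpow (b := 0) hc.ne').tendsto.comp
      tendsto_one_div_atTop_nhds_zero_nat
  refine (by simpa using hroot.mul_const lam :
    Tendsto (fun k : ℕ => c ^ ((1 : ℝ) / k) * lam) atTop (nhds lam)).congr' ?_
  filter_upwards [eventually_ne_atTop 0] with k hk
  rw [Real.mul_rpow hc.le (by positivity), one_div, Real.pow_rpow_inv_natCast hlam hk]

theorem tendsto_rpow_one_div_of_pow_bounds {x : ℕ → ℝ} {a b lam : ℝ} (ha : 0 < a) (hb : 0 < b)
    (hlam : 0 ≤ lam) (hlow : ∀ k, a * lam ^ k ≤ x k) (hhigh : ∀ k, x k ≤ b * lam ^ k) :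
    Tendsto (fun k : ℕ => x k ^ ((1 : ℝ) / k)) atTop (nhds lam) :=
  tendsto_of_tendsto_of_tendsto_of_le_of_le (tendsto_mul_pow_rpow_one_div ha hlam)
    (tendsto_mul_pow_rpow_one_div hb hlam)
    (fun k => Real.rpow_le_rpow (by positivity) (hlow k) (by positivity))
    (fun k => Real.rpow_le_rpow ((by positivity : 0 ≤ a * lam ^ k).trans (hlow k)) (hhigh k)
      (by positivity))

section Iterates

variable {D : Type*} {F : (D → ℝ) → (D → ℝ)}

theorem iterate_nonneg (hmaps : ∀ X : D → ℝ, (∀ d, 0 ≤ X d) → ∀ d, 0 ≤ F X d) (k : ℕ)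
    {X : D → ℝ} (hX : ∀ d, 0 ≤ X d) : ∀ d, 0 ≤ F^[k] X d := by
  induction k with
  | zero => exact hX
  | succ k ih => simpa only [Function.iterate_succ_apply'] using hmaps _ ih

theorem iterate_le_iterate (hmaps : ∀ X : D → ℝ, (∀ d, 0 ≤ X d) → ∀ d, 0 ≤ F X d)
    (hmono : ∀ X Y : D → ℝ, (∀ d, 0 ≤ X d) → (∀ d, 0 ≤ Y d) →
      (∀ d, X d ≤ Y d) → ∀ d, F X d ≤ F Y d)
    (k : ℕ) {X Y : D → ℝ} (hX : ∀ d, 0 ≤ X d) (hY : ∀ d, 0 ≤ Y d) (hXY : ∀ d, X d ≤ Y d) :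
    ∀ d, F^[k] X d ≤ F^[k] Y d := by
  induction k with
  | zero => exact hXY
  | succ k ih =>
    simpa only [Function.iterate_succ_apply'] using
      hmono _ _ (iterate_nonneg hmaps k hX) (iterate_nonneg hmaps k hY) ih

theorem iterate_smul_eigenvector
    (hhom : ∀ (c : ℝ), 0 < c → ∀ X : D → ℝ, (∀ d, 0 ≤ X d) → F (c • X) = c • F X)
    {lam : ℝ} (hlam : 0 < lam) {U : D → ℝ} (hU : ∀ d, 0 ≤ U d)
    (heig : ∀ d, F U d = lam * U d) {c : ℝ} (hc : 0 < c) (k : ℕ) :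
    F^[k] (c • U) = (c * lam ^ k) • U := by
  induction k with
  | zero => simp
  | succ k ih =>
    rw [Function.iterate_succ_apply', ih, hhom _ (by positivity) U hU]
    ext d
    simp only [Pi.smul_apply, smul_eq_mul, heig d]
    ring

theorem mul_pow_le_iterate_of_smul_le (hmaps : ∀ X : D → ℝ, (∀ d, 0 ≤ X d) → ∀ d, 0 ≤ F X d)
    (hmono : ∀ X Y : D → ℝ, (∀ d, 0 ≤ X d) → (∀ d, 0 ≤ Y d) →
      (∀ d, X d ≤ Y d) → ∀ d, F X d ≤ F Y d)
    (hhom : ∀ (c : ℝ), 0 < c → ∀ X : D → ℝ, (∀ d, 0 ≤ X d) → F (c • X) = c • F X)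
    {lam : ℝ} (hlam : 0 < lam) {U : D → ℝ} (hU : ∀ d, 0 ≤ U d)
    (heig : ∀ d, F U d = lam * U d) {c : ℝ} (hc : 0 < c) {X : D → ℝ} (hX : ∀ d, 0 ≤ X d)
    (hUX : ∀ d, c * U d ≤ X d) (k : ℕ) (d : D) : c * U d * lam ^ k ≤ F^[k] X d := by
  have h := iterate_le_iterate hmaps hmono k (X := c • U) (fun d => mul_nonneg hc.le (hU d)) hX hUX d
  rw [iterate_smul_eigenvector hhom hlam hU heig hc] at h
  simpa only [Pi.smul_apply, smul_eq_mul, mul_right_comm] using h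

theorem iterate_le_mul_pow_of_le_smul (hmaps : ∀ X : D → ℝ, (∀ d, 0 ≤ X d) → ∀ d, 0 ≤ F X d)
    (hmono : ∀ X Y : D → ℝ, (∀ d, 0 ≤ X d) → (∀ d, 0 ≤ Y d) →
      (∀ d, X d ≤ Y d) → ∀ d, F X d ≤ F Y d)
    (hhom : ∀ (c : ℝ), 0 < c → ∀ X : D → ℝ, (∀ d, 0 ≤ X d) → F (c • X) = c • F X)
    {lam : ℝ} (hlam : 0 < lam) {U : D → ℝ} (hU : ∀ d, 0 ≤ U d)
    (heig : ∀ d, F U d = lam * U d) {c : ℝ} (hc : 0 < c) {X : D → ℝ} (hX : ∀ d, 0 ≤ X d)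
    (hXU : ∀ d, X d ≤ c * U d) (k : ℕ) (d : D) : F^[k] X d ≤ c * U d * lam ^ k := by
  have h := iterate_le_iterate hmaps hmono k (Y := c • U) hX (fun d => mul_nonneg hc.le (hU d)) hXU d
  rw [iterate_smul_eigenvector hhom hlam hU heig hc] at h
  simpa only [Pi.smul_apply, smul_eq_mul, mul_right_comm] using h

end Iterates

theorem growth_rate_eq_of_posEigen_general
    {D : Type*} [Fintype D]
    (F : (D → ℝ) → (D → ℝ))
    (hmaps : ∀ X : D → ℝ, (∀ d, 0 ≤ X d) → ∀ d, 0 ≤ F X d)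
    (hmono : ∀ X Y : D → ℝ, (∀ d, 0 ≤ X d) → (∀ d, 0 ≤ Y d) →
      (∀ d, X d ≤ Y d) → ∀ d, F X d ≤ F Y d)
    (hhom : ∀ (c : ℝ), 0 < c → ∀ X : D → ℝ, (∀ d, 0 ≤ X d) →
      F (c • X) = c • F X)
    (lam : ℝ) (hlam : 0 < lam) (U : D → ℝ) (hU : ∀ d, 0 < U d)
    (heig : ∀ d, F U d = lam * U d) :
    ∀ d : D, Tendsto (fun k : ℕ => (F^[k] (fun _ => 1) d) ^ ((1 : ℝ) / k))
      atTop (nhds lam) := by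
  intro d
  have : Nonempty D := ⟨d⟩
  obtain ⟨dmin, hmin⟩ := Finite.exists_min U
  obtain ⟨dmax, hmax⟩ := Finite.exists_max U
  have hU' : ∀ d, 0 ≤ U d := fun d => (hU d).le
  have he : ∀ d : D, (0 : ℝ) ≤ 1 := fun _ => zero_le_one
  have hlow := mul_pow_le_iterate_of_smul_le hmaps hmono hhom hlam hU' heig
    (inv_pos.2 (hU dmax)) he (fun d' => inv_mul_le_one_of_le₀ (hmax d') (hU dmax).le)
  have hhigh := iterate_le_mul_pow_of_le_smul hmaps hmono hhom hlam hU' heig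
    (inv_pos.2 (hU dmin)) he (fun d' => (one_le_inv_mul₀ (hU dmin)).2 (hmin d'))
  exact tendsto_rpow_one_div_of_pow_bounds (mul_pos (inv_pos.2 (hU dmax)) (hU d))
    (mul_pos (inv_pos.2 (hU dmin)) (hU d)) hlam.le (hlow · d) (hhigh · d)

/-- If F is order preserving and positively homogeneous of degree 1
on ℝ₊^D and F(U) = λU for some λ > 0 and positive vector U, then for every
coordinate d, lim_k ((F^k e)_d)^{1/k} exists and equals λ; in particular the
per-coordinate growth rate is the same for every coordinate. -/
theorem growth_rate_eq_of_posEigen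
    {D : Type*} [Fintype D] [Nonempty D]
    (F : (D → ℝ) → (D → ℝ))
    (hmaps : ∀ X : D → ℝ, (∀ d, 0 ≤ X d) → ∀ d, 0 ≤ F X d)
    (hmono : ∀ X Y : D → ℝ, (∀ d, 0 ≤ X d) → (∀ d, 0 ≤ Y d) →
      (∀ d, X d ≤ Y d) → ∀ d, F X d ≤ F Y d)
    (hhom : ∀ (c : ℝ), 0 < c → ∀ X : D → ℝ, (∀ d, 0 ≤ X d) →
      F (c • X) = c • F X)
    (lam : ℝ) (hlam : 0 < lam) (U : D → ℝ) (hU : ∀ d, 0 < U d)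
    (heig : ∀ d, F U d = lam * U d) :
    ∀ d : D, Tendsto (fun k : ℕ => (F^[k] (fun _ => 1) d) ^ ((1 : ℝ) / k))
      atTop (nhds lam) :=
  growth_rate_eq_of_posEigen_general F hmaps hmono hhom lam hlam U hU heig
end

section
/- Consider an irreducible Despot-free entropy game, and suppose λ > 0 and U ∈ int ℝ₊^D satisfy F(U) = λ U. Then 1 ≤ λ ≤ nW, and U_{d'} / U_d ≤ λ^{n−1} for all d, d' ∈ D; in particular, if U is normalized so that min_{d∈D} U_d = 1, then 1 ≤ U_d ≤ λ^{n−1} for every d ∈ D. -/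
lemma reach_pow_bound {D : Type*} [Fintype D] (r : D → D → Prop)
    (U : D → ℝ) (lam : ℝ) (hlam : 1 ≤ lam) (hU : ∀ d, 0 < U d)
    (hstep : ∀ a b, r a b → U b ≤ lam * U a)
    (d b : D) (h : Relation.ReflTransGen r d b) :
    U b ≤ lam ^ (Fintype.card D - 1) * U d := by
  classical
  set n := Fintype.card D with hn
  set stp : Finset D → Finset D :=
    fun s => s ∪ Finset.univ.filter (fun c => ∃ a ∈ s, r a c) with hstp
  set g : ℕ → Finset D := fun k => stp^[k] {d} with hg
  have hgsucc : ∀ k, g (k + 1) = stp (g k) := fun k =>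
    Function.iterate_succ_apply' stp k {d}
  have hsub : ∀ k, g k ⊆ g (k + 1) := by
    intro k
    rw [hgsucc]
    exact Finset.subset_union_left
  have hbound : ∀ k, ∀ c ∈ g k, U c ≤ lam ^ k * U d := by
    intro k
    induction k with
    | zero =>
      intro c hc
      simp only [hg, Function.iterate_zero, id_eq, Finset.mem_singleton] at hc
      subst hc; simp
    | succ k ih =>
      intro c hc
      rw [hgsucc] at hc
      rcases Finset.mem_union.mp hc with hc | hc
      · calc U c ≤ lam ^ k * U d := ih c hc
          _ ≤ lam ^ (k + 1) * U d := by
            apply mul_le_mul_of_nonneg_right _ (hU d).le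
            exact pow_le_pow_right₀ hlam (Nat.le_succ k)
      · obtain ⟨-, a, ha, hac⟩ := Finset.mem_filter.mp hc
        calc U c ≤ lam * U a := hstep a c hac
          _ ≤ lam * (lam ^ k * U d) :=
            mul_le_mul_of_nonneg_left (ih a ha) (by linarith)
          _ = lam ^ (k + 1) * U d := by ring
  -- find stabilization index j < n
  have hfix : ∃ j, j ≤ n - 1 ∧ g (j + 1) = g j := by
    by_contra hcon
    push_neg at hcon
    have hcard : ∀ k, k ≤ n → k + 1 ≤ (g k).card := by
      intro k
      induction k with
      | zero =>
        intro _
        have : g 0 = {d} := rfl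
        simp [this]
      | succ k ih =>
        intro hk
        have hk' : k ≤ n - 1 := by omega
        have hne : g (k + 1) ≠ g k := hcon k hk'
        have hss : g k ⊂ g (k + 1) := (Finset.ssubset_iff_of_subset (hsub k)).mpr
          (by
            rcases Finset.exists_of_ssubset (lt_of_le_of_ne (hsub k) (Ne.symm hne)) with ⟨x, hx1, hx2⟩
            exact ⟨x, hx1, hx2⟩)
        have := Finset.card_lt_card hss
        have := ih (by omega)
        omega
    have h1 : n + 1 ≤ (g n).card := hcard n le_rfl
    have h2 : (g n).card ≤ n := by
      rw [hn]
      exact Finset.card_le_univ _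
    omega
  obtain ⟨j, hjn, hjfix⟩ := hfix
  have hfixed : ∀ i, g (j + i) = g j := by
    intro i
    have : stp (g j) = g j := by rw [← hgsucc]; exact hjfix
    calc g (j + i) = stp^[i] (g j) := by
          rw [hg]; simp only []
          rw [Nat.add_comm, Function.iterate_add_apply]
      _ = g j := Function.iterate_fixed this i
  have hreach : b ∈ g j := by
    induction h with
    | refl =>
      have : d ∈ g 0 := by simp [hg]
      have h0 : ∀ k, d ∈ g k := by
        intro k
        induction k with
        | zero => exact this
        | succ k ihk => exact hsub k ihk
      exact h0 j
    | tail _ hcb ihc =>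
      rename_i c b' _
      have : b' ∈ g (j + 1) := by
        rw [hgsucc]
        exact Finset.mem_union_right _ (Finset.mem_filter.mpr ⟨Finset.mem_univ _, c, ihc, hcb⟩)
      rwa [show j + 1 = j + 1 from rfl, hjfix] at this
  have := hbound j b hreach
  calc U b ≤ lam ^ j * U d := this
    _ ≤ lam ^ (n - 1) * U d := by
      apply mul_le_mul_of_nonneg_right _ (hU d).le
      exact pow_le_pow_right₀ hlam hjn



/-- In an irreducible Despot-free entropy game with dynamic
programming operator F_d(X) = max_{p ∈ P_d} ∑_{d'} m_{p,d'} X_{d'}, n = |D| and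
W = max m, any positive eigenvector U with eigenvalue λ > 0 (F(U) = λU)
satisfies 1 ≤ λ ≤ nW, U_{d'}/U_d ≤ λ^{n-1} for all d, d'; in particular if
min_d U_d = 1 then 1 ≤ U_d ≤ λ^{n-1} for all d. -/
theorem despotFree_irreducible_eigen_bounds
    {D P : Type*} [Fintype D] [Fintype P] [Nonempty D] [Nonempty P]
    (Pd : D → Finset P) (hPd : ∀ d, (Pd d).Nonempty)
    (m : P → D → ℕ)
    (hm : ∀ p : P, (∃ d, p ∈ Pd d) → ∃ d', 1 ≤ m p d')
    (n : ℕ) (hn : n = Fintype.card D)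
    (W : ℕ) (hW : W = Finset.univ.sup (fun pd : P × D => m pd.1 pd.2))
    (F : (D → ℝ) → (D → ℝ))
    (hF : ∀ (X : D → ℝ) (d : D),
      F X d = (Pd d).sup' (hPd d) (fun p => ∑ d', (m p d' : ℝ) * X d'))
    (hirr : ∀ d d' : D,
      Relation.ReflTransGen (fun a b : D => ∃ p ∈ Pd a, 1 ≤ m p b) d d')
    (lam : ℝ) (hlam : 0 < lam) (U : D → ℝ) (hU : ∀ d, 0 < U d)
    (heig : ∀ d, F U d = lam * U d) :
    (1 ≤ lam ∧ lam ≤ (n : ℝ) * (W : ℝ)) ∧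
    (∀ d d' : D, U d' / U d ≤ lam ^ (n - 1)) ∧
    (Finset.univ.inf' Finset.univ_nonempty U = 1 →
      ∀ d, 1 ≤ U d ∧ U d ≤ lam ^ (n - 1)) := by
  classical
  -- each F U d dominates ∑ m p d' U d' for p ∈ Pd d
  have hle : ∀ (d : D) (p : P), p ∈ Pd d →
      (∑ d', (m p d' : ℝ) * U d') ≤ lam * U d := by
    intro d p hp
    rw [← heig d, hF]
    exact Finset.le_sup' (fun p => ∑ d', (m p d' : ℝ) * U d') hp
  -- 1 ≤ lam
  have hlam1 : 1 ≤ lam := by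
    obtain ⟨d0, -, hd0⟩ := Finset.exists_min_image Finset.univ U Finset.univ_nonempty
    obtain ⟨p, hp⟩ := hPd d0
    obtain ⟨d', hd'⟩ := hm p ⟨d0, hp⟩
    have h1 : U d' ≤ (m p d' : ℝ) * U d' := by
      have : (1 : ℝ) ≤ (m p d' : ℝ) := by exact_mod_cast hd'
      nlinarith [hU d']
    have h2 : (m p d' : ℝ) * U d' ≤ ∑ e, (m p e : ℝ) * U e :=
      Finset.single_le_sum (f := fun e => (m p e : ℝ) * U e)
        (fun e _ => mul_nonneg (Nat.cast_nonneg _) (hU e).le) (Finset.mem_univ d')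
    have h3 : U d0 ≤ lam * U d0 :=
      le_trans (hd0 d' (Finset.mem_univ d')) (le_trans h1 (le_trans h2 (hle d0 p hp)))
    nlinarith [hU d0]
  -- lam ≤ n W
  have hlamnW : lam ≤ (n : ℝ) * (W : ℝ) := by
    obtain ⟨d1, -, hd1⟩ := Finset.exists_max_image Finset.univ U Finset.univ_nonempty
    obtain ⟨p, hp, hsup⟩ := Finset.exists_mem_eq_sup' (hPd d1)
      (fun p => ∑ d', (m p d' : ℝ) * U d')
    have hWm : ∀ e, (m p e : ℝ) ≤ (W : ℝ) := by
      intro e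
      have : m p e ≤ W := by
        rw [hW]
        exact Finset.le_sup (f := fun pd : P × D => m pd.1 pd.2) (Finset.mem_univ (p, e))
      exact_mod_cast this
    have h1 : lam * U d1 ≤ ∑ e : D, (W : ℝ) * U d1 := by
      rw [← heig d1, hF, hsup]
      apply Finset.sum_le_sum
      intro e _
      exact mul_le_mul (hWm e) (hd1 e (Finset.mem_univ e)) (hU e).le (Nat.cast_nonneg _)
    have h2 : (∑ _e : D, (W : ℝ) * U d1) = (n : ℝ) * (W : ℝ) * U d1 := by
      rw [Finset.sum_const, Finset.card_univ, ← hn, nsmul_eq_mul]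
      ring
    rw [h2] at h1
    exact le_of_mul_le_mul_right (by linarith) (hU d1)
  -- one-step bound
  have hstep : ∀ a b : D, (∃ p ∈ Pd a, 1 ≤ m p b) → U b ≤ lam * U a := by
    intro a b ⟨p, hp, hmb⟩
    have h1 : U b ≤ (m p b : ℝ) * U b := by
      have : (1 : ℝ) ≤ (m p b : ℝ) := by exact_mod_cast hmb
      nlinarith [hU b]
    have h2 : (m p b : ℝ) * U b ≤ ∑ e, (m p e : ℝ) * U e :=
      Finset.single_le_sum (f := fun e => (m p e : ℝ) * U e)
        (fun e _ => mul_nonneg (Nat.cast_nonneg _) (hU e).le) (Finset.mem_univ b)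
    exact le_trans h1 (le_trans h2 (hle a p hp))
  have hratio : ∀ d d' : D, U d' / U d ≤ lam ^ (n - 1) := by
    intro d d'
    rw [div_le_iff₀ (hU d)]
    have := reach_pow_bound _ U lam hlam1 hU hstep d d' (hirr d d')
    rwa [← hn] at this
  refine ⟨⟨hlam1, hlamnW⟩, hratio, ?_⟩
  intro hinf d
  constructor
  · calc (1 : ℝ) = Finset.univ.inf' Finset.univ_nonempty U := hinf.symm
      _ ≤ U d := Finset.inf'_le U (Finset.mem_univ d)
  · obtain ⟨d0, -, hd0⟩ := Finset.exists_mem_eq_inf' Finset.univ_nonempty U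
    have hUd0 : U d0 = 1 := by rw [hd0] at hinf; exact hinf
    have := hratio d0 d
    rwa [hUd0, div_one] at this
end

section
/- Consider an irreducible Despot-free entropy game, and suppose there exist λ* > 0 and U ∈ int ℝ₊^D with F(U) = λ* U. Then the set 𝒦 is nonempty and convex, and the minimum of μ over all (u, μ) ∈ 𝒦 is attained and equals log λ*. In other words, the value of the convex program min{ μ : (u,μ) ∈ 𝒦 } is the logarithm of the eigenvalue λ*. -/
open Finset Real

lemma lse_convex {ι : Type*} [Fintype ι] (w : ι → ℝ) (hw : ∀ i, 0 ≤ w i)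
    (i₀ : ι) (hw0 : 0 < w i₀) (a b : ι → ℝ) (θ η : ℝ)
    (hθ : 0 ≤ θ) (hη : 0 ≤ η) (hs : θ + η = 1) :
    Real.log (∑ i, w i * Real.exp (θ * a i + η * b i)) ≤
      θ * Real.log (∑ i, w i * Real.exp (a i)) +
      η * Real.log (∑ i, w i * Real.exp (b i)) := by
  rcases eq_or_lt_of_le hθ with h0 | hθ'
  · have hη1 : η = 1 := by linarith
    simp [← h0, hη1]
  rcases eq_or_lt_of_le hη with h0 | hη'
  · have hθ1 : θ = 1 := by linarith
    simp [← h0, hθ1]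
  set A := ∑ i, w i * Real.exp (a i) with hA
  set B := ∑ i, w i * Real.exp (b i) with hB
  have hApos : 0 < A := Finset.sum_pos' (fun i _ => mul_nonneg (hw i) (Real.exp_pos _).le)
    ⟨i₀, Finset.mem_univ _, mul_pos hw0 (Real.exp_pos _)⟩
  have hBpos : 0 < B := Finset.sum_pos' (fun i _ => mul_nonneg (hw i) (Real.exp_pos _).le)
    ⟨i₀, Finset.mem_univ _, mul_pos hw0 (Real.exp_pos _)⟩
  have hLpos : 0 < ∑ i, w i * Real.exp (θ * a i + η * b i) :=
    Finset.sum_pos' (fun i _ => mul_nonneg (hw i) (Real.exp_pos _).le)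
      ⟨i₀, Finset.mem_univ _, mul_pos hw0 (Real.exp_pos _)⟩
  have key : ∑ i, w i * Real.exp (θ * a i + η * b i) ≤ A ^ θ * B ^ η := by
    have step1 : ∀ i : ι, w i * Real.exp (θ * a i + η * b i) =
        (w i * Real.exp (a i)) ^ θ * (w i * Real.exp (b i)) ^ η := by
      intro i
      rcases eq_or_lt_of_le (hw i) with hwi | hwi
      · rw [← hwi]
        simp [Real.zero_rpow (ne_of_gt hθ'), Real.zero_rpow (ne_of_gt hη')]
      · rw [Real.mul_rpow (le_of_lt hwi) (Real.exp_pos _).le,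
          Real.mul_rpow (le_of_lt hwi) (Real.exp_pos _).le,
          ← Real.exp_mul, ← Real.exp_mul]
        have : w i ^ θ * Real.exp (a i * θ) * (w i ^ η * Real.exp (b i * η)) =
            (w i ^ θ * w i ^ η) * (Real.exp (a i * θ) * Real.exp (b i * η)) := by ring
        rw [this, ← Real.rpow_add hwi, hs, Real.rpow_one, ← Real.exp_add]
        ring_nf
    calc ∑ i, w i * Real.exp (θ * a i + η * b i)
        = ∑ i, (w i * Real.exp (a i)) ^ θ * (w i * Real.exp (b i)) ^ η := by
          exact Finset.sum_congr rfl fun i _ => step1 i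
      _ ≤ ∑ i, A ^ θ * B ^ η * (θ * (w i * Real.exp (a i) / A) + η * (w i * Real.exp (b i) / B)) := by
          apply Finset.sum_le_sum
          intro i _
          have hx : (0:ℝ) ≤ w i * Real.exp (a i) := mul_nonneg (hw i) (Real.exp_pos _).le
          have hy : (0:ℝ) ≤ w i * Real.exp (b i) := mul_nonneg (hw i) (Real.exp_pos _).le
          have hg := Real.geom_mean_le_arith_mean2_weighted hθ hη
            (div_nonneg hx hApos.le) (div_nonneg hy hBpos.le) hs
          have e1 : (w i * Real.exp (a i) / A) ^ θ = (w i * Real.exp (a i)) ^ θ / A ^ θ :=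
            Real.div_rpow hx hApos.le θ
          have e2 : (w i * Real.exp (b i) / B) ^ η = (w i * Real.exp (b i)) ^ η / B ^ η :=
            Real.div_rpow hy hBpos.le η
          rw [e1, e2] at hg
          have hAθ : (0:ℝ) < A ^ θ := Real.rpow_pos_of_pos hApos θ
          have hBη : (0:ℝ) < B ^ η := Real.rpow_pos_of_pos hBpos η
          have := mul_le_mul_of_nonneg_left hg (by positivity : (0:ℝ) ≤ A ^ θ * B ^ η)
          calc (w i * Real.exp (a i)) ^ θ * (w i * Real.exp (b i)) ^ η
              = A ^ θ * B ^ η * ((w i * Real.exp (a i)) ^ θ / A ^ θ * ((w i * Real.exp (b i)) ^ η / B ^ η)) := by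
                field_simp
            _ ≤ A ^ θ * B ^ η * (θ * (w i * Real.exp (a i) / A) + η * (w i * Real.exp (b i) / B)) := this
      _ = A ^ θ * B ^ η := by
          rw [← Finset.mul_sum]
          have : ∑ i, (θ * (w i * Real.exp (a i) / A) + η * (w i * Real.exp (b i) / B))
              = θ * (A / A) + η * (B / B) := by
            rw [Finset.sum_add_distrib]
            congr 1
            · rw [← Finset.mul_sum]
              congr 1
              rw [← Finset.sum_div]
            · rw [← Finset.mul_sum]
              congr 1
              rw [← Finset.sum_div]
          rw [this, div_self (ne_of_gt hApos), div_self (ne_of_gt hBpos)]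
          simp [hs]
  calc Real.log (∑ i, w i * Real.exp (θ * a i + η * b i))
      ≤ Real.log (A ^ θ * B ^ η) := Real.log_le_log hLpos key
    _ = θ * Real.log A + η * Real.log B := by
        rw [Real.log_mul (ne_of_gt (Real.rpow_pos_of_pos hApos θ))
          (ne_of_gt (Real.rpow_pos_of_pos hBpos η)),
          Real.log_rpow hApos, Real.log_rpow hBpos]

lemma crossing {D : Type*} {r : D → D → Prop} {S : Finset D} {a b : D}
    (ha : a ∈ S) (hb : b ∉ S) (h : Relation.ReflTransGen r a b) :
    ∃ x ∈ S, ∃ y, y ∉ S ∧ r x y := by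
  induction h with
  | refl => exact absurd ha hb
  | tail h' hr ih =>
    rename_i c d
    by_cases hc : c ∈ S
    · exact ⟨c, hc, d, hb, hr⟩
    · exact ih hc

lemma reach_bound {D : Type*} [Fintype D] [Nonempty D] (r : D → D → Prop)
    (g : D → ℝ) (c : ℝ) (hc : 1 ≤ c) (d₀ : D)
    (hpos : ∀ d, 0 < g d)
    (hstep : ∀ a b, r a b → g b ≤ c * g a)
    (hreach : ∀ d, Relation.ReflTransGen r d₀ d) :
    ∀ d, g d ≤ c ^ (Fintype.card D - 1) * g d₀ := by
  classical
  set S : ℕ → Finset D := fun k => Finset.univ.filter (fun d => g d ≤ c ^ k * g d₀) with hS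
  have hd₀ : ∀ k, d₀ ∈ S k := by
    intro k
    simp only [hS, Finset.mem_filter, Finset.mem_univ, true_and]
    nlinarith [hpos d₀, one_le_pow₀ hc (n := k)]
  have hmono : ∀ k, S k ⊆ S (k + 1) := by
    intro k d hd
    simp only [hS, Finset.mem_filter, Finset.mem_univ, true_and] at hd ⊢
    have : c ^ k ≤ c ^ (k + 1) := pow_le_pow_right₀ hc (Nat.le_succ k)
    nlinarith [hpos d₀]
  have hcard : ∀ k, S k = Finset.univ ∨ k + 1 ≤ (S k).card := by
    intro k
    induction k with
    | zero => exact Or.inr (Finset.card_pos.mpr ⟨d₀, hd₀ 0⟩)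
    | succ k ih =>
      by_cases hu : S k = Finset.univ
      · left
        exact Finset.eq_univ_of_forall fun d => hmono k (hu ▸ Finset.mem_univ d)
      · right
        rcases ih with ih | ih
        · exact absurd ih hu
        obtain ⟨b, hb⟩ : ∃ b, b ∉ S k := by
          by_contra h
          push_neg at h
          exact hu (Finset.eq_univ_iff_forall.mpr h)
        obtain ⟨x, hx, y, hy, hxy⟩ := crossing (hd₀ k) hb (hreach b)
        have hyS : y ∈ S (k + 1) := by
          simp only [hS, Finset.mem_filter, Finset.mem_univ, true_and] at hx ⊢
          calc g y ≤ c * g x := hstep x y hxy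
            _ ≤ c * (c ^ k * g d₀) := by nlinarith
            _ = c ^ (k + 1) * g d₀ := by ring
        have hsub : insert y (S k) ⊆ S (k + 1) :=
          Finset.insert_subset hyS (hmono k)
        calc k + 1 + 1 ≤ (S k).card + 1 := by omega
          _ = (insert y (S k)).card := (Finset.card_insert_of_notMem hy).symm
          _ ≤ (S (k + 1)).card := Finset.card_le_card hsub
  have hfin : S (Fintype.card D - 1) = Finset.univ := by
    rcases hcard (Fintype.card D - 1) with h | h
    · exact h
    · apply Finset.eq_univ_of_card
      have h1 : 1 ≤ Fintype.card D := Fintype.card_pos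
      have : Fintype.card D ≤ (S (Fintype.card D - 1)).card := by omega
      exact le_antisymm (by simpa using Finset.card_le_univ (S (Fintype.card D - 1))) this
  intro d
  have : d ∈ S (Fintype.card D - 1) := hfin ▸ Finset.mem_univ d
  simpa [hS] using (Finset.mem_filter.mp this).2

/-- For an irreducible Despot-free entropy game admitting a
positive eigenvector U with eigenvalue λ* > 0 of the dynamic programming
operator F, the feasible set 𝒦 (defined by f(u) ≤ μe + u and the box
constraints 0 ≤ u_d ≤ (n−1)⌈log(nW)⌉, 0 ≤ μ ≤ ⌈log(nW)⌉ + 2, where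
f = log ∘ F ∘ exp) is nonempty and convex, and the minimum of μ over
(u,μ) ∈ 𝒦 is attained and equals log λ*. -/
theorem despotFree_convex_program_value
    {D P : Type*} [Fintype D] [Fintype P] [Nonempty D] [Nonempty P]
    (Pd : D → Finset P) (hPd : ∀ d, (Pd d).Nonempty)
    (m : P → D → ℕ)
    (hm : ∀ p : P, (∃ d, p ∈ Pd d) → ∃ d', 1 ≤ m p d')
    (n : ℕ) (hn : n = Fintype.card D)
    (W : ℕ) (hW : W = Finset.univ.sup (fun pd : P × D => m pd.1 pd.2))
    (F : (D → ℝ) → (D → ℝ))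
    (hF : ∀ (X : D → ℝ) (d : D),
      F X d = (Pd d).sup' (hPd d) (fun p => ∑ d', (m p d' : ℝ) * X d'))
    (hirr : ∀ d d' : D,
      Relation.ReflTransGen (fun a b : D => ∃ p ∈ Pd a, 1 ≤ m p b) d d')
    (f : (D → ℝ) → (D → ℝ))
    (hf : ∀ (u : D → ℝ) (d : D),
      f u d = (Pd d).sup' (hPd d)
        (fun p => Real.log (∑ d', (m p d' : ℝ) * Real.exp (u d'))))
    (K : Set ((D → ℝ) × ℝ))
    (hK : K = {q : (D → ℝ) × ℝ |
      (∀ d, f q.1 d ≤ q.2 + q.1 d) ∧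
      (∀ d, 0 ≤ q.1 d ∧
        q.1 d ≤ ((n - 1 : ℕ) : ℝ) * ((⌈Real.log ((n : ℝ) * (W : ℝ))⌉ : ℤ) : ℝ)) ∧
      0 ≤ q.2 ∧ q.2 ≤ ((⌈Real.log ((n : ℝ) * (W : ℝ))⌉ : ℤ) : ℝ) + 2})
    (lamstar : ℝ) (hlam : 0 < lamstar) (U : D → ℝ) (hU : ∀ d, 0 < U d)
    (heig : ∀ d, F U d = lamstar * U d) :
    K.Nonempty ∧ Convex ℝ K ∧ IsLeast (Prod.snd '' K) (Real.log lamstar) := by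
  classical
  set C : ℝ := ((⌈Real.log ((n : ℝ) * (W : ℝ))⌉ : ℤ) : ℝ) with hC
  -- basic facts
  have hn1 : 1 ≤ n := hn ▸ Fintype.card_pos
  have hW1 : 1 ≤ W := by
    obtain ⟨p, hp⟩ := hPd (Classical.arbitrary D)
    obtain ⟨d', hd'⟩ := hm p ⟨_, hp⟩
    calc 1 ≤ m p d' := hd'
      _ ≤ W := by
        rw [hW]
        exact Finset.le_sup (f := fun pd : P × D => m pd.1 pd.2) (Finset.mem_univ (p, d'))
  have hnW : (1 : ℝ) ≤ (n : ℝ) * (W : ℝ) := by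
    have : (1 : ℕ) ≤ n * W := Nat.one_le_iff_ne_zero.mpr (by positivity)
    exact_mod_cast this
  have hlogle : Real.log ((n : ℝ) * (W : ℝ)) ≤ C := Int.le_ceil _
  have hC0 : 0 ≤ C := le_trans (Real.log_nonneg hnW) hlogle
  have hsum_le : ∀ d, ∀ p ∈ Pd d, ∑ d', (m p d' : ℝ) * U d' ≤ lamstar * U d := by
    intro d p hp
    rw [← heig d, hF]
    exact Finset.le_sup' (f := fun p => ∑ d', (m p d' : ℝ) * U d') hp
  -- lamstar ≤ nW
  obtain ⟨d₁, _, hmax⟩ := Finset.exists_max_image Finset.univ U Finset.univ_nonempty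
  have hlamle : lamstar ≤ (n : ℝ) * (W : ℝ) := by
    have h1 : lamstar * U d₁ ≤ ((n : ℝ) * (W : ℝ)) * U d₁ := by
      rw [← heig d₁, hF]
      apply Finset.sup'_le
      intro p hp
      calc ∑ d', (m p d' : ℝ) * U d' ≤ ∑ _d' : D, (W : ℝ) * U d₁ := by
            apply Finset.sum_le_sum
            intro d' _
            have hmW : (m p d' : ℝ) ≤ (W : ℝ) := by
              have : m p d' ≤ W := by
                rw [hW]
                exact Finset.le_sup (f := fun pd : P × D => m pd.1 pd.2)
                  (Finset.mem_univ (p, d'))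
              exact_mod_cast this
            exact mul_le_mul hmW (hmax d' (Finset.mem_univ d')) (hU d').le (Nat.cast_nonneg W)
        _ = ((n : ℝ) * (W : ℝ)) * U d₁ := by
            rw [Finset.sum_const, Finset.card_univ, ← hn, nsmul_eq_mul]; ring
    exact le_of_mul_le_mul_right (by linarith [h1]) (hU d₁)
  -- lamstar ≥ 1
  obtain ⟨d₀, _, hmin⟩ := Finset.exists_min_image Finset.univ U Finset.univ_nonempty
  have hlam1 : 1 ≤ lamstar := by
    obtain ⟨p, hp⟩ := hPd d₀
    obtain ⟨d'', hd''⟩ := hm p ⟨_, hp⟩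
    have h1 : U d₀ ≤ lamstar * U d₀ := by
      calc U d₀ ≤ U d'' := hmin d'' (Finset.mem_univ _)
        _ ≤ (m p d'' : ℝ) * U d'' := by
            have : (1 : ℝ) ≤ (m p d'' : ℝ) := by exact_mod_cast hd''
            nlinarith [hU d'']
        _ ≤ ∑ d', (m p d' : ℝ) * U d' :=
            Finset.single_le_sum (f := fun d' => (m p d' : ℝ) * U d')
              (fun i _ => mul_nonneg (Nat.cast_nonneg _) (hU i).le)
              (Finset.mem_univ d'')
        _ ≤ lamstar * U d₀ := hsum_le d₀ p hp
    exact le_of_mul_le_mul_right (by linarith) (hU d₀)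
  -- bound on U via reachability
  have hstep : ∀ a b : D, (∃ p ∈ Pd a, 1 ≤ m p b) → U b ≤ ((n : ℝ) * (W : ℝ)) * U a := by
    rintro a b ⟨p, hp, hmb⟩
    have h1 : U b ≤ (m p b : ℝ) * U b := by
      have : (1 : ℝ) ≤ (m p b : ℝ) := by exact_mod_cast hmb
      nlinarith [hU b]
    calc U b ≤ (m p b : ℝ) * U b := h1
      _ ≤ ∑ d', (m p d' : ℝ) * U d' :=
          Finset.single_le_sum (f := fun d' => (m p d' : ℝ) * U d')
            (fun i _ => mul_nonneg (Nat.cast_nonneg _) (hU i).le)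
            (Finset.mem_univ b)
      _ ≤ lamstar * U a := hsum_le a p hp
      _ ≤ ((n : ℝ) * (W : ℝ)) * U a := by nlinarith [hU a]
  have hbound : ∀ d, U d ≤ ((n : ℝ) * (W : ℝ)) ^ (n - 1) * U d₀ := by
    have := reach_bound (fun a b : D => ∃ p ∈ Pd a, 1 ≤ m p b) U ((n : ℝ) * (W : ℝ))
      hnW d₀ hU hstep (hirr d₀)
    rwa [← hn] at this
  -- the candidate point
  set u : D → ℝ := fun d => Real.log (U d) - Real.log (U d₀) with hu
  have hexp : ∀ d, Real.exp (u d) = U d / U d₀ := by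
    intro d
    rw [hu]
    rw [Real.exp_sub, Real.exp_log (hU _), Real.exp_log (hU _)]
  have hu0 : ∀ d, 0 ≤ u d := fun d =>
    sub_nonneg.mpr (Real.log_le_log (hU d₀) (hmin d (Finset.mem_univ d)))
  have huB : ∀ d, u d ≤ ((n - 1 : ℕ) : ℝ) * C := by
    intro d
    have hcp : (0 : ℝ) < ((n : ℝ) * (W : ℝ)) ^ (n - 1) := pow_pos (by linarith) _
    have h1 : Real.log (U d) ≤ Real.log (((n : ℝ) * (W : ℝ)) ^ (n - 1) * U d₀) :=
      Real.log_le_log (hU d) (hbound d)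
    rw [Real.log_mul (ne_of_gt hcp) (ne_of_gt (hU d₀)), Real.log_pow] at h1
    have h2 : ((n - 1 : ℕ) : ℝ) * Real.log ((n : ℝ) * (W : ℝ)) ≤ ((n - 1 : ℕ) : ℝ) * C :=
      mul_le_mul_of_nonneg_left hlogle (Nat.cast_nonneg _)
    simp only [hu]
    linarith
  have hfu : ∀ d, f u d ≤ Real.log lamstar + u d := by
    intro d
    rw [hf]
    apply Finset.sup'_le
    intro p hp
    obtain ⟨d'', hd''⟩ := hm p ⟨_, hp⟩
    have hsum : ∑ d', (m p d' : ℝ) * Real.exp (u d') = (∑ d', (m p d' : ℝ) * U d') / U d₀ := by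
      rw [Finset.sum_div]
      refine Finset.sum_congr rfl fun d' _ => ?_
      rw [hexp d']
      ring
    have hpos' : 0 < ∑ d', (m p d' : ℝ) * U d' :=
      Finset.sum_pos' (fun i _ => mul_nonneg (Nat.cast_nonneg _) (hU i).le)
        ⟨d'', Finset.mem_univ _, mul_pos (by exact_mod_cast hd'') (hU d'')⟩
    rw [hsum]
    calc Real.log ((∑ d', (m p d' : ℝ) * U d') / U d₀)
        ≤ Real.log (lamstar * U d / U d₀) := by
          apply Real.log_le_log (div_pos hpos' (hU d₀))
          gcongr
          · exact (hU d₀).le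
          · exact hsum_le d p hp
      _ = Real.log lamstar + u d := by
          rw [mul_div_assoc, Real.log_mul (ne_of_gt hlam)
            (ne_of_gt (div_pos (hU d) (hU d₀))), Real.log_div (ne_of_gt (hU d)) (ne_of_gt (hU d₀))]
  have hmem : (u, Real.log lamstar) ∈ K := by
    rw [hK]
    refine ⟨hfu, fun d => ⟨hu0 d, huB d⟩, Real.log_nonneg hlam1, ?_⟩
    have := Real.log_le_log hlam hlamle
    simp only []
    linarith
  refine ⟨⟨(u, Real.log lamstar), hmem⟩, ?_, ?_⟩
  · -- convexity
    rw [hK]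
    rintro ⟨u1, μ1⟩ h1 ⟨u2, μ2⟩ h2 θ η hθ hη hs
    simp only [Set.mem_setOf_eq] at h1 h2 ⊢
    obtain ⟨h1f, h1b, h1m0, h1m1⟩ := h1
    obtain ⟨h2f, h2b, h2m0, h2m1⟩ := h2
    have hfst : ∀ d : D, (θ • (u1, μ1) + η • (u2, μ2)).1 d = θ * u1 d + η * u2 d := fun d => rfl
    have hsnd : (θ • (u1, μ1) + η • (u2, μ2)).2 = θ * μ1 + η * μ2 := rfl
    refine ⟨?_, ?_, ?_, ?_⟩
    · intro d
      rw [hf, hsnd, hfst d]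
      apply Finset.sup'_le
      intro p hp
      obtain ⟨i₀, hi₀⟩ := hm p ⟨_, hp⟩
      have hw0 : (0 : ℝ) < (m p i₀ : ℝ) := by exact_mod_cast hi₀
      have hc := lse_convex (fun d' => (m p d' : ℝ)) (fun i => Nat.cast_nonneg _)
        i₀ hw0 u1 u2 θ η hθ hη hs
      have g1 : Real.log (∑ d', (m p d' : ℝ) * Real.exp (u1 d')) ≤ μ1 + u1 d := by
        refine le_trans ?_ (h1f d)
        rw [hf]
        exact Finset.le_sup'
          (f := fun p => Real.log (∑ d', (m p d' : ℝ) * Real.exp (u1 d'))) hp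
      have g2 : Real.log (∑ d', (m p d' : ℝ) * Real.exp (u2 d')) ≤ μ2 + u2 d := by
        refine le_trans ?_ (h2f d)
        rw [hf]
        exact Finset.le_sup'
          (f := fun p => Real.log (∑ d', (m p d' : ℝ) * Real.exp (u2 d'))) hp
      have g1' := mul_le_mul_of_nonneg_left g1 hθ
      have g2' := mul_le_mul_of_nonneg_left g2 hη
      have harg : ∀ d' : D, (θ • (u1, μ1) + η • (u2, μ2)).1 d' = θ * u1 d' + η * u2 d' :=
        fun d' => rfl
      simp only [harg]
      linarith
    · intro d
      rw [hfst d]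
      obtain ⟨ha1, hb1⟩ := h1b d
      obtain ⟨ha2, hb2⟩ := h2b d
      constructor
      · exact add_nonneg (mul_nonneg hθ ha1) (mul_nonneg hη ha2)
      · have := mul_le_mul_of_nonneg_left hb1 hθ
        have := mul_le_mul_of_nonneg_left hb2 hη
        nlinarith
    · rw [hsnd]
      exact add_nonneg (mul_nonneg hθ h1m0) (mul_nonneg hη h2m0)
    · rw [hsnd]
      have := mul_le_mul_of_nonneg_left h1m1 hθ
      have := mul_le_mul_of_nonneg_left h2m1 hη
      nlinarith
  · -- IsLeast
    refine ⟨⟨(u, Real.log lamstar), hmem, rfl⟩, ?_⟩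
    rintro x ⟨⟨v, μ⟩, hv, rfl⟩
    rw [hK] at hv
    obtain ⟨hfv, -, -, -⟩ := hv
    obtain ⟨d₂, -, hd₂⟩ := Finset.exists_min_image Finset.univ
      (fun d => Real.exp (v d) / U d) Finset.univ_nonempty
    set t : ℝ := Real.exp (v d₂) / U d₂ with ht'
    have ht : 0 < t := div_pos (Real.exp_pos _) (hU _)
    have htle : ∀ d', t * U d' ≤ Real.exp (v d') := by
      intro d'
      calc t * U d' ≤ (Real.exp (v d') / U d') * U d' :=
            mul_le_mul_of_nonneg_right (hd₂ d' (Finset.mem_univ _)) (hU d').le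
        _ = Real.exp (v d') := div_mul_cancel₀ _ (ne_of_gt (hU d'))
    obtain ⟨ps, hps, hpse⟩ := Finset.exists_mem_eq_sup' (hPd d₂)
      (fun p => ∑ d', (m p d' : ℝ) * U d')
    have hFd₂ : lamstar * U d₂ = ∑ d', (m ps d' : ℝ) * U d' := by
      rw [← heig d₂, hF]
      exact hpse
    have h1 : lamstar * (t * U d₂) = ∑ d', (m ps d' : ℝ) * (t * U d') := by
      calc lamstar * (t * U d₂) = t * (lamstar * U d₂) := by ring
        _ = t * ∑ d', (m ps d' : ℝ) * U d' := by rw [hFd₂]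
        _ = ∑ d', (m ps d' : ℝ) * (t * U d') := by
            rw [Finset.mul_sum]
            exact Finset.sum_congr rfl fun d' _ => by ring
    have h2 : ∑ d', (m ps d' : ℝ) * (t * U d') ≤ ∑ d', (m ps d' : ℝ) * Real.exp (v d') :=
      Finset.sum_le_sum fun d' _ => mul_le_mul_of_nonneg_left (htle d') (Nat.cast_nonneg _)
    have h3 : Real.log (lamstar * (t * U d₂)) ≤
        Real.log (∑ d', (m ps d' : ℝ) * Real.exp (v d')) := by
      apply Real.log_le_log (mul_pos hlam (mul_pos ht (hU d₂)))
      rw [h1]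
      exact h2
    have h4 : Real.log (lamstar * (t * U d₂)) = Real.log lamstar + v d₂ := by
      have htu : t * U d₂ = Real.exp (v d₂) := by
        rw [ht']
        exact div_mul_cancel₀ _ (ne_of_gt (hU d₂))
      rw [htu, Real.log_mul (ne_of_gt hlam) (ne_of_gt (Real.exp_pos _)), Real.log_exp]
    have h5 : Real.log (∑ d', (m ps d' : ℝ) * Real.exp (v d')) ≤ f v d₂ := by
      rw [hf]
      exact Finset.le_sup'
        (f := fun p => Real.log (∑ d', (m p d' : ℝ) * Real.exp (v d'))) hps
    have h6 := hfv d₂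
    show Real.log lamstar ≤ μ
    linarith
end

section
/- With a = ((1/2)·e, ⌈log(nW)⌉ + 3/2) ∈ ℝ^D × ℝ, r = 1/3 and R = √(n+1) · ((n−1) log(nW) + n + 1), one has B₂(a, r) ⊆ 𝒦 ⊆ B₂(a, R). -/
set_option maxHeartbeats 1600000 in
/-- With a = ((1/2)e, ⌈log(nW)⌉ + 3/2), r = 1/3 and
R = √(n+1)((n−1)log(nW) + n + 1), the Euclidean ball B₂(a,r) is contained in
the feasible set 𝒦 of the convex program, which is itself contained in
B₂(a,R). Here f is the (two-player) Shapley operator of the entropy game in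
logarithmic coordinates, and Euclidean balls in ℝ^D × ℝ ≅ ℝ^{n+1} are
expressed via the Euclidean distance √(∑_d (u_d − a_d)² + (μ − a_{n+1})²). -/
theorem feasible_set_sandwiched_between_balls
    {D T P : Type*} [Fintype D] [Fintype T] [Fintype P]
    [Nonempty D] [Nonempty T] [Nonempty P]
    (Td : D → Finset T) (hTd : ∀ d, (Td d).Nonempty)
    (Pt : T → Finset P) (hPt : ∀ t, (Pt t).Nonempty)
    (Dp : P → Finset D) (hDp : ∀ p, (Dp p).Nonempty)
    (m : P → D → ℕ) (hm : ∀ p, ∀ d' ∈ Dp p, 1 ≤ m p d')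
    (n : ℕ) (hn : n = Fintype.card D) (hn2 : 2 ≤ n)
    (W : ℕ) (hW : W = Finset.univ.sup (fun p : P => (Dp p).sup (m p)))
    (f : (D → ℝ) → (D → ℝ))
    (hf : ∀ (x : D → ℝ) (d : D),
      f x d = (Td d).inf' (hTd d) (fun t => (Pt t).sup' (hPt t)
        (fun p => Real.log (∑ d' ∈ Dp p, (m p d' : ℝ) * Real.exp (x d')))))
    (K : Set ((D → ℝ) × ℝ))
    (hK : K = {q : (D → ℝ) × ℝ |
      (∀ d, f q.1 d ≤ q.2 + q.1 d) ∧
      (∀ d, 0 ≤ q.1 d ∧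
        q.1 d ≤ ((n - 1 : ℕ) : ℝ) * ((⌈Real.log ((n : ℝ) * (W : ℝ))⌉ : ℤ) : ℝ)) ∧
      0 ≤ q.2 ∧ q.2 ≤ ((⌈Real.log ((n : ℝ) * (W : ℝ))⌉ : ℤ) : ℝ) + 2})
    (a : (D → ℝ) × ℝ)
    (ha : a = (fun _ => (1 : ℝ) / 2, ((⌈Real.log ((n : ℝ) * (W : ℝ))⌉ : ℤ) : ℝ) + 3 / 2))
    (r R : ℝ) (hr : r = 1 / 3)
    (hR : R = Real.sqrt ((n : ℝ) + 1) *
      (((n : ℝ) - 1) * Real.log ((n : ℝ) * (W : ℝ)) + (n : ℝ) + 1)) :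
    (∀ q : (D → ℝ) × ℝ,
      Real.sqrt ((∑ d, (q.1 d - a.1 d) ^ 2) + (q.2 - a.2) ^ 2) ≤ r → q ∈ K) ∧
    (∀ q ∈ K,
      Real.sqrt ((∑ d, (q.1 d - a.1 d) ^ 2) + (q.2 - a.2) ^ 2) ≤ R) := by

  have hW1 : 1 ≤ W := by
    obtain ⟨p⟩ := (inferInstance : Nonempty P)
    obtain ⟨d', hd'⟩ := hDp p
    calc 1 ≤ m p d' := hm p d' hd'
      _ ≤ (Dp p).sup (m p) := Finset.le_sup hd'
      _ ≤ Finset.univ.sup (fun p : P => (Dp p).sup (m p)) :=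
          Finset.le_sup (f := fun p : P => (Dp p).sup (m p)) (Finset.mem_univ p)
      _ = W := hW.symm
  have hWr : (1:ℝ) ≤ (W:ℝ) := by exact_mod_cast hW1
  have hnr : (2:ℝ) ≤ (n:ℝ) := by exact_mod_cast hn2
  have hnW2 : (2:ℝ) ≤ (n:ℝ) * (W:ℝ) := by nlinarith
  have hlogpos : 0 < Real.log ((n:ℝ) * (W:ℝ)) := Real.log_pos (by linarith)
  set c : ℝ := ((⌈Real.log ((n:ℝ) * (W:ℝ))⌉ : ℤ) : ℝ) with hc_def
  have hc_ge : Real.log ((n:ℝ) * (W:ℝ)) ≤ c := Int.le_ceil _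
  have hc1 : (1:ℝ) ≤ c := by
    have h : (1:ℤ) ≤ ⌈Real.log ((n:ℝ) * (W:ℝ))⌉ := Int.ceil_pos.mpr hlogpos
    rw [hc_def]
    exact_mod_cast h
  have hc_le : c ≤ Real.log ((n:ℝ) * (W:ℝ)) + 1 := le_of_lt (Int.ceil_lt_add_one _)
  have hn1cast : ((n - 1 : ℕ) : ℝ) = (n:ℝ) - 1 := by
    have h1 : 1 ≤ n := by omega
    push_cast [h1]
    ring
  subst ha hr hR hK
  constructor
  · rintro ⟨x, μ⟩ hq
    simp only at hq
    have hS0 : 0 ≤ (∑ d, (x d - 1/2)^2) + (μ - (c + 3/2))^2 := by positivity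
    have hsqrt0 : 0 ≤ Real.sqrt ((∑ d, (x d - 1/2)^2) + (μ - (c + 3/2))^2) :=
      Real.sqrt_nonneg _
    have hS : (∑ d, (x d - 1/2)^2) + (μ - (c + 3/2))^2 ≤ 1/9 := by
      have h := Real.sq_sqrt hS0
      nlinarith
    have hsum_nonneg : 0 ≤ ∑ d, (x d - 1/2)^2 :=
      Finset.sum_nonneg (fun i _ => sq_nonneg _)
    have hx : ∀ d, 1/6 ≤ x d ∧ x d ≤ 5/6 := by
      intro d
      have h1 : (x d - 1/2)^2 ≤ ∑ d', (x d' - 1/2)^2 :=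
        Finset.single_le_sum (f := fun d' => (x d' - 1/2)^2)
          (fun i _ => sq_nonneg _) (Finset.mem_univ d)
      have h2 : (x d - 1/2)^2 ≤ 1/9 := by nlinarith [sq_nonneg (μ - (c + 3/2))]
      constructor <;> nlinarith
    have hμ : c + 7/6 ≤ μ ∧ μ ≤ c + 11/6 := by
      have h2 : (μ - (c + 3/2))^2 ≤ 1/9 := by linarith
      constructor <;> nlinarith
    refine ⟨?_, ?_, ?_, ?_⟩
    · intro d
      rw [hf]
      obtain ⟨t, ht⟩ := hTd d
      refine le_trans (Finset.inf'_le _ ht) ?_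
      refine Finset.sup'_le _ _ (fun p hp => ?_)
      have hsum_pos : 0 < ∑ d' ∈ Dp p, (m p d' : ℝ) * Real.exp (x d') := by
        refine Finset.sum_pos (fun d' hd' => ?_) (hDp p)
        have : 1 ≤ m p d' := hm p d' hd'
        have : (1:ℝ) ≤ (m p d' : ℝ) := by exact_mod_cast this
        positivity
      have hsum_le : ∑ d' ∈ Dp p, (m p d' : ℝ) * Real.exp (x d')
          ≤ (n:ℝ) * (W:ℝ) * Real.exp (5/6) := by
        have hcard : ((Dp p).card : ℝ) ≤ (n:ℝ) := by
          have h : (Dp p).card ≤ n := by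
            rw [hn, ← Finset.card_univ]
            exact Finset.card_le_univ _
          exact_mod_cast h
        calc ∑ d' ∈ Dp p, (m p d' : ℝ) * Real.exp (x d')
            ≤ ∑ _d' ∈ Dp p, (W:ℝ) * Real.exp (5/6) := by
              refine Finset.sum_le_sum (fun d' hd' => ?_)
              have hmW : (m p d' : ℝ) ≤ (W:ℝ) := by
                have : m p d' ≤ W := by
                  rw [hW]
                  exact le_trans (Finset.le_sup hd')
                    (Finset.le_sup (f := fun p : P => (Dp p).sup (m p))
                      (Finset.mem_univ p))
                exact_mod_cast this
              have hexp : Real.exp (x d') ≤ Real.exp (5/6) :=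
                Real.exp_le_exp.mpr (hx d').2
              exact mul_le_mul hmW hexp (Real.exp_nonneg _) (by linarith)
          _ = ((Dp p).card : ℝ) * ((W:ℝ) * Real.exp (5/6)) := by
              rw [Finset.sum_const, nsmul_eq_mul]
          _ ≤ (n:ℝ) * ((W:ℝ) * Real.exp (5/6)) := by
              refine mul_le_mul_of_nonneg_right hcard ?_
              positivity
          _ = (n:ℝ) * (W:ℝ) * Real.exp (5/6) := by ring
      have hlog_le : Real.log (∑ d' ∈ Dp p, (m p d' : ℝ) * Real.exp (x d'))
          ≤ Real.log ((n:ℝ) * (W:ℝ)) + 5/6 := by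
        have h := Real.log_le_log hsum_pos hsum_le
        rwa [Real.log_mul (by positivity) (Real.exp_ne_zero _), Real.log_exp] at h
      have := (hx d).1
      have := hμ.1
      linarith
    · intro d
      have h1 : (1:ℝ) ≤ ((n - 1 : ℕ) : ℝ) := by rw [hn1cast]; linarith
      refine ⟨by linarith [(hx d).1], ?_⟩
      have := (hx d).2
      nlinarith
    · linarith [hμ.1]
    · linarith [hμ.2]
  · rintro ⟨x, μ⟩ hq
    simp only [Set.mem_setOf_eq] at hq
    obtain ⟨h1, h2, h3, h4⟩ := hq
    simp only at h1 h2 h3 h4 ⊢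
    set M : ℝ := ((n:ℝ) - 1) * Real.log ((n:ℝ) * (W:ℝ)) + (n:ℝ) + 1 with hM_def
    have hM3 : 3 ≤ M := by nlinarith
    have hM0 : 0 ≤ M := by linarith
    have hxd : ∀ d, (x d - 1/2)^2 ≤ M^2 := by
      intro d
      obtain ⟨hl, hu⟩ := h2 d
      rw [hn1cast] at hu
      have hmul : ((n:ℝ) - 1) * c ≤ ((n:ℝ) - 1) * (Real.log ((n:ℝ) * (W:ℝ)) + 1) :=
        mul_le_mul_of_nonneg_left hc_le (by linarith)
      nlinarith
    have hμd : (μ - (c + 3/2))^2 ≤ M^2 := by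
      have hkey : 0 ≤ ((n:ℝ) - 2) * Real.log ((n:ℝ) * (W:ℝ)) :=
        mul_nonneg (by linarith) hlogpos.le
      nlinarith
    have hsum : (∑ d, (x d - 1/2)^2) + (μ - (c + 3/2))^2 ≤ ((n:ℝ) + 1) * M^2 := by
      have h := Finset.sum_le_card_nsmul Finset.univ (fun d => (x d - 1/2)^2) (M^2)
        (fun d _ => hxd d)
      rw [Finset.card_univ, ← hn, nsmul_eq_mul] at h
      nlinarith
    calc Real.sqrt ((∑ d, (x d - 1/2)^2) + (μ - (c + 3/2))^2)
        ≤ Real.sqrt (((n:ℝ) + 1) * M^2) := Real.sqrt_le_sqrt hsum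
      _ = Real.sqrt ((n:ℝ) + 1) * M := by
          rw [Real.sqrt_mul (by positivity), Real.sqrt_sq hM0]
end

section
/- Let n ≥ 1 and W ≥ 1 be integers, and let A and B be n×n matrices with natural-number entries all bounded by W. If λ is an eigenvalue of A and μ is an eigenvalue of B with λ ≠ μ, then |λ − μ| ≥ (2 · (2n)^{n+2} · ((2⌈√n⌉ W)^{2n} + 1)^{2n})^{−1}. In particular, if the spectral radii of A and B are distinct, they differ by at least this quantity. -/
/-!
If `A u = λ u` and `B v = μ v`, then `u ⊗ v` is an eigenvector of the Kronecker sum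
`A ⊗ 1 - 1 ⊗ B` for the eigenvalue `λ - μ`. This is an `n² × n²` integer matrix with entries
bounded by `W`, so by Gershgorin every root of its monic integral characteristic polynomial has
modulus at most `n² W`. After splitting off the factor `X ^ k`, the product of the remaining roots
is a nonzero integer, hence the nonzero root `λ - μ` has modulus at least `(n² W) ^ -(n² - 1)`,
which dominates the stated bound.

For the spectral radii we need that the spectral radius `ρ` of a nonnegative matrix `M` is an
eigenvalue. For `0 ≤ x < ρ⁻¹` the resolvent `(1 - x M)⁻¹ = ∑ xᵏ Mᵏ` is entrywise nonnegative;
if `ρ` were not an eigenvalue, continuity would give `R := (1 - ρ⁻¹ M)⁻¹ ≥ 0`. But the moduli `a`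
of the entries of an eigenvector for an eigenvalue of modulus `ρ` satisfy `(1 - ρ⁻¹ M) a ≤ 0`,
so `a = R (1 - ρ⁻¹ M) a ≤ 0` forces `a = 0`.
-/

open Matrix Polynomial Module.End
open scoped NNReal ENNReal Kronecker

theorem spectrum.hasSum_pow_smul_pow_inverse_one_sub_smul {A : Type*} [NormedRing A]
    [NormedAlgebra ℂ A] [CompleteSpace A] {a : A} {x : ℂ}
    (hx : (‖x‖₊ : ℝ≥0∞) < (spectralRadius ℂ a)⁻¹) :
    HasSum (fun k => x ^ k • a ^ k) (Ring.inverse (1 - x • a)) := by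
  -- The Neumann series, a priori convergent for `‖x‖ < ‖a‖⁻¹`, is the Taylor series of a function
  -- holomorphic on the larger disc, so it converges there too.
  obtain ⟨r, hxr, hr⟩ := ENNReal.lt_iff_exists_nnreal_btwn.1 hx
  have hr0 : 0 < r := ENNReal.coe_pos.1 (bot_le.trans_lt hxr)
  have H := (hasFPowerSeriesOnBall_inverse_one_sub_smul ℂ a).exchange_radius
    ((spectrum.differentiableOn_inverse_one_sub_smul hr).hasFPowerSeriesOnBall hr0)
  simpa using H.hasSum (y := x) (by simpa [← coe_nnnorm] using hxr)

namespace Polynomial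

theorem one_le_prod_norm_roots_map {q : ℤ[X]} (hq : q.Monic) (h0 : q.coeff 0 ≠ 0) :
    1 ≤ ((q.map (Int.castRingHom ℂ)).roots.map (‖·‖)).prod := by
  have hprod := (IsAlgClosed.splits (q.map (Int.castRingHom ℂ))).coeff_zero_eq_prod_roots_of_monic
    (hq.map _)
  calc (1 : ℝ) ≤ |(q.coeff 0 : ℝ)| := by exact_mod_cast Int.one_le_abs h0
    _ = ‖(q.map (Int.castRingHom ℂ)).coeff 0‖ := by simp [coeff_map]
    _ = _ := by
      rw [hprod, norm_mul, norm_pow, norm_neg, norm_one, one_pow, one_mul]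
      exact map_multiset_prod (normHom : ℂ →*₀ ℝ) _

theorem inv_pow_le_norm_of_isRoot_map {p : ℤ[X]} (hp : p.Monic) {c : ℝ} (hc : 1 ≤ c)
    (hroots : ∀ w, (p.map (Int.castRingHom ℂ)).IsRoot w → ‖w‖ ≤ c) {z : ℂ}
    (hz : (p.map (Int.castRingHom ℂ)).IsRoot z) (hz0 : z ≠ 0) :
    (c ^ (p.natDegree - 1))⁻¹ ≤ ‖z‖ := by
  -- Write `p = X ^ k * q` with `q 0 ≠ 0`: the roots of `q` multiply to the nonzero integer `± q 0`.
  obtain ⟨q, hpq, hXq⟩ := p.exists_eq_pow_rootMultiplicity_mul_and_not_dvd hp.ne_zero 0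
  rw [map_zero, sub_zero] at hpq hXq
  have hq : q.Monic := (monic_X_pow _).of_mul_monic_left (hpq ▸ hp)
  set Q := q.map (Int.castRingHom ℂ)
  have hQp : Q ∣ p.map (Int.castRingHom ℂ) := Polynomial.map_dvd _ (hpq ▸ dvd_mul_left q _)
  have hzQ : z ∈ Q.roots := by
    rw [mem_roots (hq.map _).ne_zero]
    have := hpq ▸ hz
    simpa [Polynomial.map_mul, hz0] using this
  have hcard : Q.roots.card - 1 ≤ p.natDegree - 1 := by
    refine Nat.sub_le_sub_right ((card_roots' Q).trans ?_) 1
    rw [hq.natDegree_map]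
    exact natDegree_le_of_dvd (hpq ▸ dvd_mul_left q _) hp.ne_zero
  have hbound : ∀ w ∈ Q.roots.erase z, ‖w‖ ≤ c := fun w hw =>
    hroots w ((mem_roots (hp.map _).ne_zero).1 (Multiset.mem_of_le
      (roots.le_of_dvd (hp.map _).ne_zero hQp) (Multiset.mem_of_mem_erase hw)))
  have hrest : ((Q.roots.erase z).map (‖·‖)).prod ≤ c ^ (p.natDegree - 1) :=
    calc ((Q.roots.erase z).map (‖·‖)).prod ≤ ((Q.roots.erase z).map fun _ => c).prod :=
          Multiset.prod_map_le_prod_map₀ _ _ (fun _ _ => norm_nonneg _) hbound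
      _ = c ^ (Q.roots.card - 1) := by
          rw [Multiset.map_const', Multiset.prod_replicate, Multiset.card_erase_of_mem hzQ,
            Nat.pred_eq_sub_one]
      _ ≤ c ^ (p.natDegree - 1) := pow_le_pow_right₀ hc hcard
  have hone : 1 ≤ ‖z‖ * ((Q.roots.erase z).map (‖·‖)).prod := by
    rw [← Multiset.prod_cons, ← Multiset.map_cons, Multiset.cons_erase hzQ]
    exact one_le_prod_norm_roots_map hq (mt X_dvd_iff.2 hXq)
  rw [inv_le_iff_one_le_mul₀ (by positivity)]
  calc 1 ≤ ‖z‖ * ((Q.roots.erase z).map (‖·‖)).prod := hone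
    _ ≤ ‖z‖ * c ^ (p.natDegree - 1) := by gcongr

end Polynomial

namespace Matrix

variable {K ι κ : Type*}

theorem norm_kroneckerSum_map_natCast_apply_le [DecidableEq ι] {A B : Matrix ι ι ℕ} {W : ℕ}
    (hA : ∀ i j, A i j ≤ W) (hB : ∀ i j, B i j ≤ W) (p q : ι × ι) :
    ‖(A.map (Nat.cast : ℕ → ℂ) ⊗ₖ 1 - 1 ⊗ₖ B.map (Nat.cast : ℕ → ℂ) :
      Matrix (ι × ι) (ι × ι) ℂ) p q‖ ≤ W := by
  obtain ⟨i, j⟩ := p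
  obtain ⟨k, l⟩ := q
  have hA' : (A i k : ℝ) ≤ W := by exact_mod_cast hA i k
  have hB' : (B j l : ℝ) ≤ W := by exact_mod_cast hB j l
  simp only [sub_apply, kroneckerMap_apply, map_apply, one_apply, mul_ite, ite_mul, mul_one,
    one_mul, mul_zero, zero_mul]
  split_ifs
  · rw [← Complex.ofReal_natCast, ← Complex.ofReal_natCast, ← Complex.ofReal_sub,
      Complex.norm_real, Real.norm_eq_abs]
    exact abs_sub_le_of_nonneg_of_le (Nat.cast_nonneg _) hA' (Nat.cast_nonneg _) hB'
  all_goals simp [hA, hB]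

variable [Fintype ι] [Fintype κ]

theorem norm_mul_norm_le_sum_of_mulVec_eq_smul [NormedRing K] [NormMulClass K]
    {M : Matrix ι ι K} {z : K} {v : ι → K} (hv : M *ᵥ v = z • v) (i : ι) :
    ‖z‖ * ‖v i‖ ≤ ∑ j, ‖M i j‖ * ‖v j‖ :=
  calc ‖z‖ * ‖v i‖ = ‖∑ j, M i j * v j‖ := by
        rw [← norm_mul, ← smul_eq_mul, ← Pi.smul_apply, ← hv]; rfl
    _ ≤ ∑ j, ‖M i j * v j‖ := norm_sum_le _ _
    _ ≤ ∑ j, ‖M i j‖ * ‖v j‖ := Finset.sum_le_sum fun j _ => norm_mul_le _ _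

variable [DecidableEq ι] [DecidableEq κ]

theorem hasEigenvalue_toLin'_iff_isRoot_charpoly [Field K] (M : Matrix ι ι K) (z : K) :
    HasEigenvalue (toLin' M) z ↔ M.charpoly.IsRoot z := by
  rw [hasEigenvalue_iff_isRoot_charpoly, charpoly_toLin']

theorem exists_mulVec_eq_smul_of_isRoot_charpoly [Field K] {M : Matrix ι ι K} {z : K}
    (hz : M.charpoly.IsRoot z) : ∃ v ≠ 0, M *ᵥ v = z • v := by
  obtain ⟨v, hv⟩ := ((hasEigenvalue_toLin'_iff_isRoot_charpoly M z).2 hz).exists_hasEigenvector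
  exact ⟨v, hv.2, by simpa using hv.apply_eq_smul⟩

theorem isRoot_charpoly_kroneckerSum [Field K] {A : Matrix ι ι K} {B : Matrix κ κ K} {a b : K}
    (ha : A.charpoly.IsRoot a) (hb : B.charpoly.IsRoot b) :
    (A ⊗ₖ 1 - 1 ⊗ₖ B).charpoly.IsRoot (a - b) := by
  obtain ⟨u, hu0, hu⟩ := exists_mulVec_eq_smul_of_isRoot_charpoly ha
  obtain ⟨v, hv0, hv⟩ := exists_mulVec_eq_smul_of_isRoot_charpoly hb
  rw [← hasEigenvalue_toLin'_iff_isRoot_charpoly]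
  refine hasEigenvalue_of_hasEigenvector (x := vec (vecMulVec v u)) ⟨?_, ?_⟩
  · rw [mem_eigenspace_iff, toLin'_apply, sub_mulVec, kronecker_mulVec_vec, kronecker_mulVec_vec,
      Matrix.one_mul, transpose_one, Matrix.mul_one, vecMulVec_mul, vecMul_transpose, hu,
      mul_vecMulVec, hv, vecMulVec_smul, smul_vecMulVec, vec_smul, vec_smul, sub_smul]
  · obtain ⟨i, hi⟩ := Function.ne_iff.1 hu0
    obtain ⟨j, hj⟩ := Function.ne_iff.1 hv0
    exact Function.ne_iff.2 ⟨(i, j), mul_ne_zero hj hi⟩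

theorem norm_le_card_mul_of_isRoot_charpoly [NormedField K] {M : Matrix ι ι K} {c : ℝ}
    (hM : ∀ i j, ‖M i j‖ ≤ c) {z : K} (hz : M.charpoly.IsRoot z) :
    ‖z‖ ≤ Fintype.card ι * c := by
  obtain ⟨k, hk⟩ := eigenvalue_mem_ball ((hasEigenvalue_toLin'_iff_isRoot_charpoly M z).2 hz)
  rw [Metric.mem_closedBall, dist_eq_norm] at hk
  calc ‖z‖ ≤ ‖M k k‖ + ‖z - M k k‖ := norm_le_insert' z (M k k)
    _ ≤ ‖M k k‖ + ∑ j ∈ Finset.univ.erase k, ‖M k j‖ := by gcongr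
    _ = ∑ j, ‖M k j‖ := Finset.add_sum_erase _ (fun j => ‖M k j‖) (Finset.mem_univ k)
    _ ≤ ∑ _j : ι, c := Finset.sum_le_sum fun j _ => hM k j
    _ = Fintype.card ι * c := by simp

theorem inv_pow_le_norm_sub_of_isRoot_charpoly {A B : Matrix ι ι ℕ} {W : ℕ} [Nonempty ι]
    (hW : 1 ≤ W) (hA : ∀ i j, A i j ≤ W) (hB : ∀ i j, B i j ≤ W) {a b : ℂ}
    (ha : (A.map (Nat.cast : ℕ → ℂ)).charpoly.IsRoot a)
    (hb : (B.map (Nat.cast : ℕ → ℂ)).charpoly.IsRoot b) (hab : a ≠ b) :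
    (((Fintype.card ι ^ 2 * W : ℕ) : ℝ) ^ (Fintype.card ι ^ 2 - 1))⁻¹ ≤ ‖a - b‖ := by
  set K : Matrix (ι × ι) (ι × ι) ℤ := A.map (↑) ⊗ₖ 1 - 1 ⊗ₖ B.map (↑)
  have hK : K.map (Int.castRingHom ℂ) = A.map (↑) ⊗ₖ 1 - 1 ⊗ₖ B.map (↑) := by
    ext ⟨i, j⟩ ⟨k, l⟩
    by_cases hik : i = k <;> by_cases hjl : j = l <;> simp [K, kroneckerMap_apply, hik, hjl]
  have hroots : ∀ w, (K.charpoly.map (Int.castRingHom ℂ)).IsRoot w →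
      ‖w‖ ≤ ((Fintype.card ι ^ 2 * W : ℕ) : ℝ) := fun w hw => by
    rw [← charpoly_map, hK] at hw
    have := norm_le_card_mul_of_isRoot_charpoly (norm_kroneckerSum_map_natCast_apply_le hA hB) hw
    simpa [sq] using this
  have hc : (1 : ℝ) ≤ ((Fintype.card ι ^ 2 * W : ℕ) : ℝ) := by
    exact_mod_cast Nat.one_le_iff_ne_zero.2 (by positivity)
  have hroot : (K.charpoly.map (Int.castRingHom ℂ)).IsRoot (a - b) := by
    rw [← charpoly_map, hK]
    exact isRoot_charpoly_kroneckerSum ha hb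
  simpa [charpoly_natDegree_eq_dim, sq] using
    inv_pow_le_norm_of_isRoot_map K.charpoly_monic hc hroots hroot (sub_ne_zero.2 hab)

section Nonneg

open scoped ComplexOrder Matrix.Norms.Operator

theorem hasSum_pow_smul_pow_of_forall_isRoot {M : Matrix ι ι ℂ} {ρ : ℝ}
    (hρ : ∀ w, M.charpoly.IsRoot w → ‖w‖ ≤ ρ) {x : ℂ} (hx : ‖x‖ * ρ < 1) :
    HasSum (fun k => x ^ k • M ^ k) (Ring.inverse (1 - x • M)) := by
  refine spectrum.hasSum_pow_smul_pow_inverse_one_sub_smul ?_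
  have hsr : spectralRadius ℂ M ≤ ENNReal.ofReal ρ := iSup₂_le fun w hw => by
    rw [← enorm_eq_nnnorm, ← ofReal_norm]
    exact ENNReal.ofReal_le_ofReal (hρ w (mem_spectrum_iff_isRoot_charpoly.1 hw))
  refine lt_of_lt_of_le ?_ (ENNReal.inv_le_inv.2 hsr)
  rcases le_or_gt ρ 0 with h | h
  · simp [ENNReal.ofReal_of_nonpos h]
  · rw [← ENNReal.ofReal_inv_of_pos h, ← enorm_eq_nnnorm, ← ofReal_norm,
      ENNReal.ofReal_lt_ofReal_iff (inv_pos.2 h)]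
    rwa [← one_div, lt_div_iff₀ h]

theorem inverse_one_sub_smul_apply_nonneg {M : Matrix ι ι ℂ} (hM : ∀ i j, 0 ≤ M i j) {ρ : ℝ}
    (hρ : ∀ w, M.charpoly.IsRoot w → ‖w‖ ≤ ρ) {x : ℝ} (hx0 : 0 ≤ x) (hx : x * ρ < 1) (i j : ι) :
    0 ≤ Ring.inverse (1 - (x : ℂ) • M) i j := by
  have hsum := hasSum_pow_smul_pow_of_forall_isRoot hρ (x := x) (by simpa [abs_of_nonneg hx0])
  refine (Pi.hasSum.1 (Pi.hasSum.1 hsum i) j).nonneg fun k => ?_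
  exact mul_nonneg (pow_nonneg (Complex.zero_le_real.2 hx0) k) (pow_apply_nonneg hM k i j)

theorem inverse_one_sub_smul_apply_nonneg_of_isUnit {M : Matrix ι ι ℂ} (hM : ∀ i j, 0 ≤ M i j)
    {ρ : ℝ} (hρ0 : 0 < ρ) (hρ : ∀ w, M.charpoly.IsRoot w → ‖w‖ ≤ ρ)
    (hunit : IsUnit (1 - ((ρ⁻¹ : ℝ) : ℂ) • M)) (i j : ι) :
    0 ≤ Ring.inverse (1 - ((ρ⁻¹ : ℝ) : ℂ) • M) i j := by
  have hcont : ContinuousAt (fun x : ℝ => Ring.inverse (1 - (x : ℂ) • M)) ρ⁻¹ :=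
    (NormedRing.inverse_continuousAt hunit.unit).comp_of_eq (by fun_prop) (by simp)
  refine ge_of_tendsto (((continuous_apply_apply i j).tendsto _).comp
    (hcont.tendsto.mono_left (nhdsWithin_le_nhds (s := Set.Iio ρ⁻¹)))) ?_
  filter_upwards [Ioo_mem_nhdsLT (inv_pos.2 hρ0)] with x hx
  exact inverse_one_sub_smul_apply_nonneg hM hρ hx.1.le
    ((mul_lt_mul_of_pos_right hx.2 hρ0).trans_eq (inv_mul_cancel₀ hρ0.ne')) i j

theorem isRoot_charpoly_norm_of_forall_norm_le {M : Matrix ι ι ℂ} (hM : ∀ i j, 0 ≤ M i j) {z : ℂ}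
    (hz : M.charpoly.IsRoot z) (hmax : ∀ w, M.charpoly.IsRoot w → ‖w‖ ≤ ‖z‖) :
    M.charpoly.IsRoot (‖z‖ : ℂ) := by
  by_contra hρ
  set ρ := ‖z‖
  have hρ0 : 0 < ρ := norm_pos_iff.2 fun h0 => hρ (by simpa [ρ, h0] using hz)
  have hunit : IsUnit (1 - ((ρ⁻¹ : ℝ) : ℂ) • M) := by
    have h := spectrum.notMem_iff.1 (mt mem_spectrum_iff_isRoot_charpoly.1 hρ)
    rw [Algebra.algebraMap_eq_smul_one, ← Units.val_mk0 (Complex.ofReal_ne_zero.2 hρ0.ne'),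
      ← Units.smul_def, IsUnit.smul_sub_iff_sub_inv_smul] at h
    simpa [Units.smul_def] using h
  have hR := inverse_one_sub_smul_apply_nonneg_of_isUnit hM hρ0 hmax hunit
  set R := Ring.inverse (1 - ((ρ⁻¹ : ℝ) : ℂ) • M)
  obtain ⟨v, hv0, hv⟩ := exists_mulVec_eq_smul_of_isRoot_charpoly hz
  set a : ι → ℂ := fun i => (‖v i‖ : ℂ)
  have hb : ∀ i, ((1 - ((ρ⁻¹ : ℝ) : ℂ) • M) *ᵥ a) i ≤ 0 := fun i => by
    have h := norm_mul_norm_le_sum_of_mulVec_eq_smul hv i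
    have : ((1 - ((ρ⁻¹ : ℝ) : ℂ) • M) *ᵥ a) i = ((‖v i‖ - ρ⁻¹ * ∑ j, ‖M i j‖ * ‖v j‖ : ℝ) : ℂ) := by
      rw [sub_mulVec, one_mulVec, smul_mulVec]
      simp [a, mulVec, dotProduct, Complex.norm_of_nonneg' (hM _ _)]
    rw [this, ← Complex.ofReal_zero, Complex.real_le_real, sub_nonpos]
    exact (le_inv_mul_iff₀ hρ0).2 h
  have ha : a = R *ᵥ ((1 - ((ρ⁻¹ : ℝ) : ℂ) • M) *ᵥ a) := by
    rw [mulVec_mulVec, Ring.inverse_mul_cancel _ hunit, one_mulVec]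
  refine hv0 (funext fun i => norm_le_zero_iff.1 (Complex.real_le_real.1 ?_))
  rw [Complex.ofReal_zero, show ((‖v i‖ : ℝ) : ℂ) = a i from rfl, ha]
  exact Finset.sum_nonpos fun j _ => mul_nonpos_of_nonneg_of_nonpos (hR i j) (hb j)

theorem exists_isRoot_charpoly_forall_norm_le [Nonempty ι] (M : Matrix ι ι ℂ) :
    ∃ z, M.charpoly.IsRoot z ∧ ∀ w, M.charpoly.IsRoot w → ‖w‖ ≤ ‖z‖ := by
  have hM := M.charpoly_monic.ne_zero
  obtain ⟨z, hz⟩ := IsAlgClosed.exists_root M.charpoly (by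
    rw [degree_eq_natDegree hM, charpoly_natDegree_eq_dim]
    exact_mod_cast Fintype.card_ne_zero)
  obtain ⟨z, hz, hmax⟩ := M.charpoly.roots.toFinset.exists_max_image (‖·‖)
    ⟨z, by simpa [hM] using hz⟩
  simp only [Multiset.mem_toFinset, mem_roots hM] at hz hmax
  exact ⟨z, hz, hmax⟩

theorem isRoot_charpoly_sSup_norm [Nonempty ι] {M : Matrix ι ι ℂ} (hM : ∀ i j, 0 ≤ M i j) :
    M.charpoly.IsRoot (sSup {x : ℝ | ∃ z, M.charpoly.IsRoot z ∧ ‖z‖ = x} : ℝ) := by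
  obtain ⟨z, hz, hmax⟩ := exists_isRoot_charpoly_forall_norm_le M
  have hgreatest : IsGreatest {x : ℝ | ∃ z, M.charpoly.IsRoot z ∧ ‖z‖ = x} ‖z‖ :=
    ⟨⟨z, hz, rfl⟩, by rintro _ ⟨w, hw, rfl⟩; exact hmax w hw⟩
  rw [hgreatest.csSup_eq]
  exact isRoot_charpoly_norm_of_forall_norm_le hM hz hmax

theorem isRoot_charpoly_map_natCast_sSup_norm [Nonempty ι] (M : Matrix ι ι ℕ) :
    (M.map (Nat.cast : ℕ → ℂ)).charpoly.IsRoot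
      (sSup {x : ℝ | ∃ z, (M.map (Nat.cast : ℕ → ℂ)).charpoly.IsRoot z ∧ ‖z‖ = x} : ℝ) :=
  isRoot_charpoly_sSup_norm fun _ _ => Nat.cast_nonneg _

end Nonneg

end Matrix

noncomputable def separationBound (n W : ℕ) : ℝ :=
  (2 * (2 * (n : ℝ)) ^ (n + 2) *
    ((2 * ((⌈Real.sqrt n⌉ : ℤ) : ℝ) * (W : ℝ)) ^ (2 * n) + 1) ^ (2 * n))⁻¹

theorem separationBound_le_inv_pow {n W : ℕ} (hn : 1 ≤ n) (hW : 1 ≤ W) :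
    separationBound n W ≤ (((n ^ 2 * W : ℕ) : ℝ) ^ (n ^ 2 - 1))⁻¹ := by
  set s : ℝ := ((⌈Real.sqrt n⌉ : ℤ) : ℝ)
  set t : ℝ := 2 * s * W
  have hn1 : (1 : ℝ) ≤ n := by exact_mod_cast hn
  have hW1 : (1 : ℝ) ≤ W := by exact_mod_cast hW
  have hns : (n : ℝ) ^ 2 ≤ (s ^ 2) ^ 2 := by
    refine pow_le_pow_left₀ n.cast_nonneg ?_ 2
    calc (n : ℝ) = Real.sqrt n ^ 2 := (Real.sq_sqrt n.cast_nonneg).symm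
      _ ≤ s ^ 2 := pow_le_pow_left₀ (Real.sqrt_nonneg _) (Int.le_ceil _) 2
  have hc1 : (1 : ℝ) ≤ ((n ^ 2 * W : ℕ) : ℝ) := by
    exact_mod_cast Nat.one_le_iff_ne_zero.2 (by positivity)
  have hct : ((n ^ 2 * W : ℕ) : ℝ) ≤ t ^ 4 := by
    push_cast
    calc (n : ℝ) ^ 2 * W ≤ (s ^ 2) ^ 2 * W ^ 4 :=
          mul_le_mul hns (le_self_pow₀ hW1 (by norm_num)) (by positivity) (by positivity)
      _ ≤ 16 * ((s ^ 2) ^ 2 * W ^ 4) := by linarith [show 0 ≤ (s ^ 2) ^ 2 * W ^ 4 by positivity]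
      _ = t ^ 4 := by ring
  refine inv_anti₀ (by positivity) ?_
  calc ((n ^ 2 * W : ℕ) : ℝ) ^ (n ^ 2 - 1) ≤ ((n ^ 2 * W : ℕ) : ℝ) ^ (n ^ 2) :=
        pow_le_pow_right₀ hc1 (Nat.sub_le _ _)
    _ ≤ (t ^ 4) ^ (n ^ 2) := pow_le_pow_left₀ (by positivity) hct _
    _ = (t ^ (2 * n)) ^ (2 * n) := by rw [← pow_mul, ← pow_mul]; ring_nf
    _ ≤ (t ^ (2 * n) + 1) ^ (2 * n) := by gcongr; linarith
    _ ≤ 2 * (2 * (n : ℝ)) ^ (n + 2) * (t ^ (2 * n) + 1) ^ (2 * n) := by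
        refine le_mul_of_one_le_left (by positivity) ?_
        linarith [one_le_pow₀ (by linarith : (1 : ℝ) ≤ 2 * n) (n := n + 2)]

theorem separationBound_le_norm_sub_of_isRoot_charpoly {n W : ℕ} (hn : 1 ≤ n) (hW : 1 ≤ W)
    {A B : Matrix (Fin n) (Fin n) ℕ} (hA : ∀ i j, A i j ≤ W) (hB : ∀ i j, B i j ≤ W) {a b : ℂ}
    (ha : (A.map (Nat.cast : ℕ → ℂ)).charpoly.IsRoot a)
    (hb : (B.map (Nat.cast : ℕ → ℂ)).charpoly.IsRoot b) (hab : a ≠ b) :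
    separationBound n W ≤ ‖a - b‖ :=
  have : Nonempty (Fin n) := ⟨⟨0, hn⟩⟩
  (separationBound_le_inv_pow hn hW).trans
    (by simpa using inv_pow_le_norm_sub_of_isRoot_charpoly hW hA hB ha hb hab)

/-- If A and B are n×n matrices with natural-number entries
bounded by W (n, W ≥ 1), then any two distinct eigenvalues λ (of A) and μ
(of B) satisfy |λ − μ| ≥ (2(2n)^{n+2}((2⌈√n⌉W)^{2n} + 1)^{2n})⁻¹; in
particular, distinct spectral radii of A and B differ by at least this
quantity. -/
theorem eigenvalue_separation_bound
    (n W : ℕ) (hn : 1 ≤ n) (hW : 1 ≤ W)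
    (A B : Matrix (Fin n) (Fin n) ℕ)
    (hA : ∀ i j, A i j ≤ W) (hB : ∀ i j, B i j ≤ W) :
    (∀ lam mu : ℂ,
      ((A.map (Nat.cast : ℕ → ℂ)).charpoly).IsRoot lam →
      ((B.map (Nat.cast : ℕ → ℂ)).charpoly).IsRoot mu →
      lam ≠ mu →
      (2 * (2 * (n : ℝ)) ^ (n + 2) *
        ((2 * ((⌈Real.sqrt n⌉ : ℤ) : ℝ) * (W : ℝ)) ^ (2 * n) + 1) ^ (2 * n))⁻¹
        ≤ ‖lam - mu‖) ∧
    (∀ rA rB : ℝ,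
      rA = sSup {x : ℝ | ∃ z : ℂ,
        ((A.map (Nat.cast : ℕ → ℂ)).charpoly).IsRoot z ∧ ‖z‖ = x} →
      rB = sSup {x : ℝ | ∃ z : ℂ,
        ((B.map (Nat.cast : ℕ → ℂ)).charpoly).IsRoot z ∧ ‖z‖ = x} →
      rA ≠ rB →
      (2 * (2 * (n : ℝ)) ^ (n + 2) *
        ((2 * ((⌈Real.sqrt n⌉ : ℤ) : ℝ) * (W : ℝ)) ^ (2 * n) + 1) ^ (2 * n))⁻¹
        ≤ |rA - rB|) := by
  have : Nonempty (Fin n) := ⟨⟨0, hn⟩⟩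
  refine ⟨fun lam mu => separationBound_le_norm_sub_of_isRoot_charpoly hn hW hA hB, ?_⟩
  rintro rA rB rfl rfl hne
  rw [← Real.norm_eq_abs, ← Complex.norm_real, Complex.ofReal_sub]
  exact separationBound_le_norm_sub_of_isRoot_charpoly hn hW hA hB
    (isRoot_charpoly_map_natCast_sSup_norm A) (isRoot_charpoly_map_natCast_sSup_norm B)
    (by exact_mod_cast hne)
end

section
/- Let M be an irreducible nonnegative n×n real matrix, let u ∈ ℝⁿ be a vector with all coordinates positive, and let λ ∈ ℝ. If Mu ≥ λu entrywise and Mu ≠ λu, then ρ(M) > λ. -/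
/-!
Irreducibility makes `B = ∑_{m<K} M ^ m` entrywise positive for large `K`. Since `B` commutes
with `M`, the vector `v = B u` satisfies `M v - λ v = B (M u - λ u) > 0` in every coordinate, so
`μ v ≤ M v` for some `μ > λ`. Iterating gives `μ ^ k v ≤ M ^ k v`; read at a maximal coordinate of
`v` this says `μ ^ k ≤ ‖M ^ k‖` in the `ℓ∞`-operator norm, and Gelfand's formula yields `μ ≤ ρ(M)`.
-/

open Finset

lemma exists_gt_smul_le_of_forall_mul_lt {n R : Type*} [Fintype n] [Nonempty n] [Field R]
    [LinearOrder R] [IsStrictOrderedRing R] {v y : n → R} (hv : ∀ i, 0 < v i) {lam : R}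
    (h : ∀ i, lam * v i < y i) : ∃ μ, lam < μ ∧ μ • v ≤ y :=
  ⟨univ.inf' univ_nonempty fun i => y i / v i,
    (lt_inf'_iff _).2 fun i _ => (lt_div_iff₀ (hv i)).2 (h i),
    fun i => (le_div_iff₀ (hv i)).1 (inf'_le _ (mem_univ i))⟩

namespace Matrix

variable {m n R : Type*} [Fintype n]

section OrderedSemiring

variable [CommSemiring R] [PartialOrder R] [IsOrderedRing R]

lemma mulVec_mono_of_nonneg {M : Matrix m n R} (hM : ∀ i j, 0 ≤ M i j) {v w : n → R}
    (h : v ≤ w) : M *ᵥ v ≤ M *ᵥ w := fun i =>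
  sum_le_sum fun j _ => mul_le_mul_of_nonneg_left (h j) (hM i j)

variable [DecidableEq n]

lemma pow_smul_le_pow_mulVec {M : Matrix n n R} (hM : ∀ i j, 0 ≤ M i j) {μ : R} (hμ : 0 ≤ μ)
    {v : n → R} (h : μ • v ≤ M *ᵥ v) (k : ℕ) : μ ^ k • v ≤ M ^ k *ᵥ v := by
  induction k with
  | zero => simp
  | succ k ih =>
    calc μ ^ (k + 1) • v = μ ^ k • (μ • v) := by rw [pow_succ, mul_smul]
      _ ≤ μ ^ k • (M *ᵥ v) := smul_le_smul_of_nonneg_left h (pow_nonneg hμ k)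
      _ = M *ᵥ (μ ^ k • v) := (mulVec_smul M _ v).symm
      _ ≤ M *ᵥ (M ^ k *ᵥ v) := mulVec_mono_of_nonneg hM ih
      _ = M ^ (k + 1) *ᵥ v := by rw [mulVec_mulVec, pow_succ']

end OrderedSemiring

section StrictOrderedRing

variable [CommRing R] [LinearOrder R] [IsStrictOrderedRing R]

lemma mulVec_apply_pos {B : Matrix m n R} (hB : ∀ i j, 0 < B i j) {w : n → R} (hw : 0 ≤ w)
    (hw0 : w ≠ 0) (i : m) : 0 < (B *ᵥ w) i := by
  obtain ⟨j, hj⟩ := Function.ne_iff.1 hw0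
  exact sum_pos' (fun l _ => mul_nonneg (hB i l).le (hw l))
    ⟨j, mem_univ j, mul_pos (hB i j) ((hw j).lt_of_ne' hj)⟩

lemma le_sum_apply_of_smul_le_mulVec {M : Matrix n n R} (hM : ∀ i j, 0 ≤ M i j) {v : n → R}
    {μ : R} (h : μ • v ≤ M *ᵥ v) {i : n} (hvi : 0 < v i) (hmax : ∀ j, v j ≤ v i) :
    μ ≤ ∑ j, M i j := by
  refine le_of_mul_le_mul_right ?_ hvi
  calc μ * v i ≤ ∑ j, M i j * v j := h i
    _ ≤ ∑ j, M i j * v i := sum_le_sum fun j _ => mul_le_mul_of_nonneg_left (hmax j) (hM i j)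
    _ = (∑ j, M i j) * v i := sum_mul .. |>.symm

variable [DecidableEq n]

lemma IsIrreducible.exists_sum_pow_apply_pos {M : Matrix n n R} (hM : M.IsIrreducible) :
    ∃ K, ∀ i j, 0 < (∑ m ∈ range K, M ^ m) i j := by
  choose k _ hk using (isIrreducible_iff_exists_pow_pos hM.nonneg).1 hM
  refine ⟨univ.sup (fun p : n × n => k p.1 p.2) + 1, fun i j => ?_⟩
  rw [sum_apply]
  refine sum_pos' (fun m _ => pow_apply_nonneg hM.nonneg m i j) ⟨k i j, ?_, hk i j⟩
  exact mem_range.2 (Nat.lt_succ_of_le (le_sup (f := fun p : n × n => k p.1 p.2) (mem_univ (i, j))))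

lemma IsIrreducible.exists_pos_lt_mulVec {M : Matrix n n R} (hM : M.IsIrreducible) {u : n → R}
    (hu : ∀ i, 0 < u i) {lam : R} (hge : lam • u ≤ M *ᵥ u) (hne : M *ᵥ u ≠ lam • u) :
    ∃ v : n → R, (∀ i, 0 < v i) ∧ ∀ i, lam * v i < (M *ᵥ v) i := by
  obtain ⟨K, hB⟩ := hM.exists_sum_pow_apply_pos
  set B := ∑ m ∈ range K, M ^ m
  have hMB : M * B = B * M := (Commute.sum_right _ _ _ fun m _ => (Commute.refl M).pow_right m).eq
  refine ⟨B *ᵥ u, fun i => mulVec_apply_pos hB (fun j => (hu j).le) ?_ i, fun i => ?_⟩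
  · exact fun h => (hu i).ne' (congrFun h i)
  have key : M *ᵥ (B *ᵥ u) - lam • (B *ᵥ u) = B *ᵥ (M *ᵥ u - lam • u) := by
    rw [mulVec_sub, mulVec_smul, mulVec_mulVec, mulVec_mulVec, hMB]
  have hpos := mulVec_apply_pos hB (sub_nonneg.2 hge) (sub_ne_zero.2 hne) i
  rwa [← key, Pi.sub_apply, Pi.smul_apply, smul_eq_mul, sub_pos] at hpos

end StrictOrderedRing

end Matrix

lemma spectrum.ofReal_le_spectralRadius_of_pow_le_norm {A : Type*} [NormedRing A]
    [NormedAlgebra ℂ A] [CompleteSpace A] (a : A) {μ : ℝ} (hμ : 0 ≤ μ)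
    (h : ∀ k : ℕ, μ ^ k ≤ ‖a ^ k‖) : ENNReal.ofReal μ ≤ spectralRadius ℂ a := by
  refine ge_of_tendsto (pow_norm_pow_one_div_tendsto_nhds_spectralRadius a) ?_
  filter_upwards [Filter.eventually_ne_atTop 0] with k hk
  refine ENNReal.ofReal_le_ofReal ?_
  calc μ = (μ ^ k) ^ (1 / k : ℝ) := by rw [one_div, Real.pow_rpow_inv_natCast hμ hk]
    _ ≤ ‖a ^ k‖ ^ (1 / k : ℝ) := by gcongr; exact h k

namespace Matrix

variable {n : Type*} [Fintype n]

attribute [local instance] Matrix.linftyOpSeminormedAddCommGroup Matrix.linftyOpNormedRing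
  Matrix.linftyOpNormedAlgebra

lemma sum_norm_apply_le_linfty_opNorm {m α : Type*} [Fintype m] [SeminormedAddCommGroup α]
    (A : Matrix m n α) (i : m) : ∑ j, ‖A i j‖ ≤ ‖A‖ := by
  have h := le_sup (f := fun i => ∑ j, ‖A i j‖₊) (mem_univ i)
  rw [← linfty_opNNNorm_def, ← NNReal.coe_le_coe] at h
  simpa using h

variable [DecidableEq n]

lemma ofReal_le_spectralRadius_of_smul_le_mulVec {M : Matrix n n ℝ} (hM : ∀ i j, 0 ≤ M i j)
    {v : n → ℝ} (hv : 0 ≤ v) (hv0 : v ≠ 0) {μ : ℝ} (h : μ • v ≤ M *ᵥ v) :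
    ENNReal.ofReal μ ≤ spectralRadius ℂ (M.map Complex.ofReal) := by
  rcases le_or_gt μ 0 with hμ | hμ
  · simp [ENNReal.ofReal_of_nonpos hμ]
  obtain ⟨j, hj⟩ := Function.ne_iff.1 hv0
  obtain ⟨i, -, hi⟩ := exists_max_image univ v ⟨j, mem_univ j⟩
  have hvi : 0 < v i := ((hv j).lt_of_ne' hj).trans_le (hi j (mem_univ j))
  refine spectrum.ofReal_le_spectralRadius_of_pow_le_norm _ hμ.le fun k => ?_
  calc μ ^ k ≤ ∑ j, (M ^ k) i j :=
        le_sum_apply_of_smul_le_mulVec (pow_apply_nonneg hM k) (pow_smul_le_pow_mulVec hM hμ.le h k)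
          hvi fun j => hi j (mem_univ j)
    _ = ∑ j, ‖(M.map Complex.ofReal ^ k) i j‖ := by
        have hpow : M.map Complex.ofReal ^ k = (M ^ k).map Complex.ofReal :=
          (Matrix.map_pow M Complex.ofRealHom k).symm
        refine sum_congr rfl fun j _ => ?_
        rw [hpow, map_apply, Complex.norm_real, Real.norm_of_nonneg (pow_apply_nonneg hM k i j)]
    _ ≤ ‖M.map Complex.ofReal ^ k‖ := sum_norm_apply_le_linfty_opNorm _ i

lemma exists_isRoot_charpoly_le_norm [Nonempty n] {A : Matrix n n ℂ} {μ : ℝ}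
    (h : ENNReal.ofReal μ ≤ spectralRadius ℂ A) : ∃ z, A.charpoly.IsRoot z ∧ μ ≤ ‖z‖ := by
  obtain ⟨z, hz, hzA⟩ := spectrum.exists_nnnorm_eq_spectralRadius_of_nonempty (spectrum.nonempty A)
  refine ⟨z, mem_spectrum_iff_isRoot_charpoly.1 hz, ?_⟩
  rw [← hzA] at h
  simpa using (ENNReal.ofReal_le_iff_le_toReal ENNReal.coe_ne_top).1 h

lemma norm_le_sSup_norm_roots_charpoly {A : Matrix n n ℂ} {z : ℂ} (hz : A.charpoly.IsRoot z) :
    ‖z‖ ≤ sSup {x : ℝ | ∃ z : ℂ, A.charpoly.IsRoot z ∧ ‖z‖ = x} := by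
  refine le_csSup ?_ ⟨z, hz, rfl⟩
  convert ((Polynomial.finite_setOfPred_isRoot A.charpoly_monic.ne_zero).image (‖·‖)).bddAbove
  ext; simp

end Matrix

/-- If M is an irreducible nonnegative n×n real matrix, u a
positive vector and λ a real with Mu ≥ λu and Mu ≠ λu, then the spectral
radius of M (the maximum modulus of the complex roots of its characteristic
polynomial) is > λ. -/
theorem spectral_radius_gt_of_strict_superEigen
    (n : ℕ) (hn : 1 ≤ n) (M : Matrix (Fin n) (Fin n) ℝ)
    (hnonneg : ∀ i j, 0 ≤ M i j)
    (hirr : ∀ i j, ∃ k : ℕ, 1 ≤ k ∧ 0 < (M ^ k) i j)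
    (u : Fin n → ℝ) (hu : ∀ i, 0 < u i) (lam : ℝ)
    (hge : ∀ i, lam * u i ≤ M.mulVec u i)
    (hne : M.mulVec u ≠ fun i => lam * u i) :
    lam < sSup {x : ℝ | ∃ z : ℂ,
      ((M.map (Complex.ofReal : ℝ → ℂ)).charpoly).IsRoot z ∧
      ‖z‖ = x} := by
  have : Nonempty (Fin n) := ⟨⟨0, hn⟩⟩
  have hM : M.IsIrreducible := (Matrix.isIrreducible_iff_exists_pow_pos hnonneg).2 hirr
  obtain ⟨v, hv, hlt⟩ := hM.exists_pos_lt_mulVec hu hge hne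
  obtain ⟨μ, hlamμ, hμ⟩ := exists_gt_smul_le_of_forall_mul_lt hv hlt
  have hv0 : v ≠ 0 := fun h => (hv ⟨0, hn⟩).ne' (congrFun h _)
  obtain ⟨z, hz, hμz⟩ := Matrix.exists_isRoot_charpoly_le_norm
    (Matrix.ofReal_le_spectralRadius_of_smul_le_mulVec hnonneg (fun i => (hv i).le) hv0 hμ)
  calc lam < μ := hlamμ
    _ ≤ ‖z‖ := hμz
    _ ≤ _ := Matrix.norm_le_sSup_norm_roots_charpoly hz
end

section
/- Let D be a nonempty finite set with n := |D|, and let F be a map on vectors X ∈ ℝ^D with all coordinates positive such that F_d(X) > 0 for every such X and every d ∈ D. Define G_d(X) = F_d(X) / (∏_{d'∈D} F_{d'}(X))^{1/n} and H_d(X) = (X_d · G_d(X))^{1/2}. Then for any X ∈ ℝ^D with all coordinates positive, H(X) = X if and only if ∏_{d∈D} X_d = 1 and there exists λ > 0 with F(X) = λX (in which case λ = (∏_{d'∈D} F_{d'}(X))^{1/n}). -/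
/-- Let D be a nonempty finite set with n = |D| and F a map on
positive vectors of ℝ^D with F_d(X) > 0. With
G_d(X) = F_d(X)/(∏_{d'} F_{d'}(X))^{1/n} and H_d(X) = √(X_d · G_d(X)),
for any positive X: H(X) = X iff ∏_d X_d = 1 and there is λ > 0 with
F(X) = λX, in which case λ = (∏_{d'} F_{d'}(X))^{1/n}. -/
theorem krasnoselskii_mann_fixed_point_iff_eigen
    {D : Type*} [Fintype D] [Nonempty D]
    (n : ℕ) (hn : n = Fintype.card D)
    (F : (D → ℝ) → (D → ℝ))
    (hF : ∀ X : D → ℝ, (∀ d, 0 < X d) → ∀ d, 0 < F X d)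
    (G H : (D → ℝ) → (D → ℝ))
    (hG : ∀ (X : D → ℝ) (d : D),
      G X d = F X d / (∏ d', F X d') ^ ((1 : ℝ) / n))
    (hH : ∀ (X : D → ℝ) (d : D), H X d = Real.sqrt (X d * G X d))
    (X : D → ℝ) (hX : ∀ d, 0 < X d) :
    H X = X ↔
      ((∏ d, X d) = 1 ∧ ∃ lam : ℝ, 0 < lam ∧ (∀ d, F X d = lam * X d) ∧
        lam = (∏ d', F X d') ^ ((1 : ℝ) / n)) := by
  have hn0 : n ≠ 0 := by
    rw [hn]; exact Fintype.card_ne_zero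
  have hP : 0 < ∏ d', F X d' := Finset.prod_pos fun d _ => hF X hX d
  set P : ℝ := ∏ d', F X d' with hPdef
  set c : ℝ := P ^ ((1 : ℝ) / n) with hcdef
  have hc : 0 < c := Real.rpow_pos_of_pos hP _
  have hcn : c ^ n = P := by
    rw [hcdef, ← Real.rpow_natCast (P ^ ((1:ℝ)/n)) n, ← Real.rpow_mul hP.le]
    rw [one_div, inv_mul_cancel₀ (by exact_mod_cast hn0), Real.rpow_one]
  constructor
  · intro hfix
    have key : ∀ d, F X d = c * X d := by
      intro d
      have h1 : Real.sqrt (X d * (F X d / c)) = X d := by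
        have := congrFun hfix d
        rwa [hH, hG] at this
      have h2 : X d * (F X d / c) = (X d) ^ 2 := by
        have hnn : 0 ≤ X d * (F X d / c) :=
          mul_nonneg (hX d).le (div_nonneg (hF X hX d).le hc.le)
        have := congrArg (· ^ 2) h1
        simpa [Real.sq_sqrt hnn] using this
      have h3 : X d * F X d = X d * (c * X d) := by
        field_simp at h2; linarith [h2]
      exact mul_left_cancel₀ (hX d).ne' h3
    have hprod : P = c ^ n * ∏ d, X d := by
      rw [hPdef]
      calc ∏ d', F X d' = ∏ d', c * X d' := by
            exact Finset.prod_congr rfl fun d _ => key d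
        _ = c ^ n * ∏ d, X d := by
            rw [Finset.prod_mul_distrib, Finset.prod_const, Finset.card_univ, hn]
    refine ⟨?_, c, hc, key, rfl⟩
    rw [hcn] at hprod
    exact (mul_left_cancel₀ hP.ne' (by rw [mul_one]; exact hprod)).symm
  · rintro ⟨hprod1, lam, hlam, hFeq, hlamc⟩
    funext d
    rw [hH, hG, hFeq d, hlamc]
    have : X d * (c * X d / c) = (X d) ^ 2 := by
      field_simp
    rw [this, Real.sqrt_sq (hX d).le]
end
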